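/- arXiv:0704.3669 — 7 statements merged into one kernel-verified Lean document; each statement's English description precedes it below -/
import Mathlib

section
/- For every nonnegative integer k, in the field of rational functions ℚ(v) with q = v², the identity (1-v)·(-v²;-v)_{2k} / (q^{k+1};q)_{k+1} = ∏_{i=0}^k (1+v^{2i+1})^{-1} holds, where (-v²;-v)_{2k} = ∏_{i=2}^{2k+1}(1+(-v)^i) and (q^{k+1};q)_{k+1} = ∏_{j=0}^{k}(1-q^{k+1+j}). -/
/-!
Cleared of denominators, the identity says that
`(1 - v) (-v²;-v)_{2k} ∏_{i ≤ k} (1 + v^{2i+1}) = (q^{k+1};q)_{k+1}`, a polynomial identity which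
holds in every commutative ring and follows by induction on `k`. In `ℚ(v)` the denominator
`(q^{k+1};q)_{k+1}` is a product of nonzero factors `1 - v^{2m}`, so one may divide by it.
-/

open Finset

theorem one_sub_mul_prod_one_add_neg_pow_mul_prod_one_add_pow {R : Type*} [CommRing R] (x : R)
    (k : ℕ) :
    (1 - x) * (∏ i ∈ range (2 * k), (1 + (-x) ^ (i + 2))) *
        ∏ i ∈ range (k + 1), (1 + x ^ (2 * i + 1)) =
      ∏ j ∈ range (k + 1), (1 - (x ^ 2) ^ (k + 1 + j)) := by
  induction k with
  | zero => simp only [mul_zero, zero_add, prod_range_zero, prod_range_one]; ring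
  | succ k ih =>
    -- The left side gains the factor `(1 + x^(2k+2)) (1 - x^(4k+6))`; the right side loses
    -- `1 - x^(2k+2)` and gains `(1 - x^(4k+4)) (1 - x^(4k+6))`, and `1 - x^(4k+4)` factors.
    have hbottom : ∏ j ∈ range (k + 1), (1 - (x ^ 2) ^ (k + 1 + j)) =
        (∏ j ∈ range k, (1 - (x ^ 2) ^ (k + 1 + 1 + j))) * (1 - x ^ (2 * k + 2)) := by
      rw [prod_range_succ', ← pow_mul]
      congr 1
      exact prod_congr rfl fun j _ => by ring_nf
    have hsigned : ∏ i ∈ range (2 * (k + 1)), (1 + (-x) ^ (i + 2)) =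
        (∏ i ∈ range (2 * k), (1 + (-x) ^ (i + 2))) * (1 + x ^ (2 * k + 2)) *
          (1 - x ^ (2 * k + 3)) := by
      rw [show 2 * (k + 1) = 2 * k + 1 + 1 by ring, prod_range_succ, prod_range_succ,
        Even.neg_pow ⟨k + 1, by ring⟩, Odd.neg_pow ⟨k + 1, by ring⟩]
      ring
    have htop : ∏ j ∈ range (k + 1 + 1), (1 - (x ^ 2) ^ (k + 1 + 1 + j)) =
        (∏ j ∈ range k, (1 - (x ^ 2) ^ (k + 1 + 1 + j))) * (1 - x ^ (4 * k + 4)) *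
          (1 - x ^ (4 * k + 6)) := by
      rw [prod_range_succ, prod_range_succ, ← pow_mul, ← pow_mul]
      ring_nf
    rw [hbottom] at ih
    rw [hsigned, prod_range_succ _ (k + 1), htop]
    linear_combination (1 + x ^ (2 * k + 2)) * (1 - x ^ (4 * k + 6)) * ih

theorem RatFunc.one_sub_X_pow_ne_zero {K : Type*} [Field K] {n : ℕ} (hn : n ≠ 0) :
    (1 - X ^ n : RatFunc K) ≠ 0 := by
  have h := RatFunc.algebraMap_ne_zero
    (Polynomial.X_pow_sub_C_ne_zero (Nat.pos_of_ne_zero hn) (1 : K))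
  rw [map_sub, map_pow, RatFunc.algebraMap_X, RatFunc.algebraMap_C, map_one] at h
  exact sub_ne_zero.mpr (sub_ne_zero.mp h).symm

theorem unified_factor_identity (k : ℕ) :
    let v : RatFunc ℚ := RatFunc.X
    let q : RatFunc ℚ := v ^ 2
    (1 - v) * (∏ i ∈ Finset.range (2 * k), (1 + (-v) ^ (i + 2))) /
        ∏ j ∈ Finset.range (k + 1), (1 - q ^ (k + 1 + j)) =
      (∏ i ∈ Finset.range (k + 1), (1 + v ^ (2 * i + 1)))⁻¹ := by
  intro v q
  have hden : ∏ j ∈ range (k + 1), (1 - q ^ (k + 1 + j)) ≠ 0 :=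
    prod_ne_zero_iff.mpr fun j _ => by
      rw [← pow_mul]
      exact RatFunc.one_sub_X_pow_ne_zero (by omega)
  refine eq_inv_of_mul_eq_one_left ?_
  rw [div_mul_eq_mul_div, one_sub_mul_prod_one_add_neg_pow_mul_prod_one_add_pow, div_self hden]
end

section
/- Let L_{-1} : ℤ[x^{±1}, q^{±1}] → ℤ[q^{±1}] be the ℤ[q^{±1}]-linear map sending x^a to q^{a²} for each integer a. Then for every nonnegative integer k, L_{-1}((x;q)_{k+1} · (x^{-1};q)_{k+1}) = 2·(q^{k+1};q)_{k+1}, where (y;q)_{k+1} = ∏_{i=0}^{k}(1 - y q^i). -/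
open LaurentPolynomial Finset

/-- The ring `ℤ[q^{±1}]` of Laurent polynomials in `q`. -/
noncomputable abbrev Rq := LaurentPolynomial ℤ

/-- The `ℤ[q^{±1}]`-linear "Laplace transform" on `ℤ[x^{±1}, q^{±1}]`
(modeled as Laurent polynomials in `x` over `ℤ[q^{±1}]`), sending the monomial
`x^a` to `g a ∈ ℤ[q^{±1}]`. -/
noncomputable def Lap (g : ℤ → Rq) (f : LaurentPolynomial Rq) : Rq :=
  Finsupp.sum f.coeff fun a c => c * g a

/-!
Write `L` for `L_{-1}` and `σ` for the substitution `x ↦ q x`. Since `L (x^a) = q^{a²}`, the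
functional `L ∘ σ^c` has weights `q^{a² + c a}`, and multiplying by `x^{±1}` before applying it
shifts `c` by `±2`. Apply this to the finite theta function `Θ_n = (x;q)_n (q/x;q)_n` and its
moments `u_c = L (σ^c Θ_n)`. Invariance of `Θ_n` under `x ↦ q/x` gives `u_c = u_{1-c}`, and the
`q`-difference equation `(q^n - x) σΘ_n = (1 - q^n x) Θ_n` gives a linear recurrence in `c`.
Together they express `u_2` and `u_3` through `u_0`, whence
`L Θ_{n+1} = (1 + q^{n+1}) (1 - q^{2n+1}) L Θ_n`, i.e. `L Θ_n = (q^{n+1};q)_n`. Finally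
`(x;q)_{k+1} (x^{-1};q)_{k+1} = (1 - x^{-1}) (1 - q^k x) Θ_k` is sent to `2 (1 - q^{2k+1}) L Θ_k`.
-/

instance {R : Type*} [CommSemiring R] [CharZero R] : CharZero (LaurentPolynomial R) :=
  charZero_of_injective_algebraMap (R := R) fun a b h => by
    have := congrArg (fun p : LaurentPolynomial R => p.coeff 0) h
    simp only [← C_eq_algebraMap, ← single_eq_C, AddMonoidAlgebra.coeff_single,
      Finsupp.single_eq_same] at this
    exact this

theorem one_sub_T_ne_zero {R : Type*} [Ring R] [Nontrivial R] {m : ℤ} (hm : m ≠ 0) :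
    (1 - T m : R[T;T⁻¹]) ≠ 0 := by
  rw [sub_ne_zero, ← T_zero]
  intro h
  have := congrArg degree h
  rw [degree_T, degree_T] at this
  exact hm (WithBot.coe_injective this).symm

theorem T_one_mul_T_neg_one {R : Type*} [Semiring R] : (T 1 : R[T;T⁻¹]) * T (-1) = 1 := by
  rw [← T_add, add_neg_cancel, T_zero]

theorem T_two_mul_add_one {R : Type*} [Semiring R] (n : ℤ) :
    (T (2 * n + 1) : R[T;T⁻¹]) = T 1 * T n ^ 2 := by
  rw [T_pow, ← T_add]
  ring_nf

/-- The substitution `x ↦ q x`, where `x = T 1` and `q = C (T 1)`. -/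
noncomputable def qShift {R : Type*} [CommSemiring R] :
    LaurentPolynomial (LaurentPolynomial R) →ₐ[LaurentPolynomial R]
      LaurentPolynomial (LaurentPolynomial R) :=
  AddMonoidAlgebra.lift _ _ ℤ
    ((C : LaurentPolynomial R →+* _).toMonoidHom.comp (AddMonoidAlgebra.of R ℤ) *
      AddMonoidAlgebra.of _ ℤ)

theorem qShift_C_mul_T {R : Type*} [CommSemiring R] (r : LaurentPolynomial R) (n : ℤ) :
    qShift (C r * T n) = C (r * T n) * T n := by
  rw [← single_eq_C_mul_T, qShift, AddMonoidAlgebra.lift_single, smul_eq_C_mul, map_mul,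
    mul_assoc]
  rfl

section qShift

variable {R : Type*} [CommRing R] (i : ℤ)

theorem qShift_one_sub_T_one_mul :
    qShift (1 - T 1 * C (T i) : LaurentPolynomial (LaurentPolynomial R)) =
      1 - T 1 * C (T (i + 1)) := by
  rw [map_sub, map_one, mul_comm, qShift_C_mul_T, ← T_add, mul_comm, add_comm]

theorem qShift_one_sub_T_neg_one_mul :
    qShift (1 - T (-1) * C (T (i + 1)) : LaurentPolynomial (LaurentPolynomial R)) =
      1 - T (-1) * C (T i) := by
  rw [map_sub, map_one, mul_comm, qShift_C_mul_T, ← T_add, add_neg_cancel_right, mul_comm]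

end qShift

section Lap

variable (g : ℤ → Rq)

theorem lap_add (f₁ f₂ : LaurentPolynomial Rq) : Lap g (f₁ + f₂) = Lap g f₁ + Lap g f₂ :=
  Finsupp.sum_add_index' (fun _ => zero_mul _) fun _ _ _ => add_mul _ _ _

theorem lap_sub (f₁ f₂ : LaurentPolynomial Rq) : Lap g (f₁ - f₂) = Lap g f₁ - Lap g f₂ :=
  Finsupp.sum_sub_index fun _ _ _ => sub_mul _ _ _

theorem lap_C_mul_T (r : Rq) (n : ℤ) : Lap g (C r * T n) = r * g n := by
  rw [Lap, ← single_eq_C_mul_T, AddMonoidAlgebra.coeff_single]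
  exact Finsupp.sum_single_index (zero_mul _)

theorem lap_const_mul (r : Rq) (f : LaurentPolynomial Rq) :
    Lap (fun a => r * g a) f = r * Lap g f := by
  rw [Lap, Lap, Finsupp.mul_sum]
  exact Finsupp.sum_congr fun _ _ => mul_left_comm _ _ _

theorem lap_map_eq_of_monomial {F : Type*}
    [FunLike F (LaurentPolynomial Rq) (LaurentPolynomial Rq)]
    [AddMonoidHomClass F (LaurentPolynomial Rq) (LaurentPolynomial Rq)] (φ : F) (g' : ℤ → Rq)
    (h : ∀ r n, Lap g (φ (C r * T n)) = r * g' n) (f : LaurentPolynomial Rq) :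
    Lap g (φ f) = Lap g' f := by
  induction f using LaurentPolynomial.induction_on' with
  | add p q hp hq => rw [map_add, lap_add, lap_add, hp, hq]
  | C_mul_T n r => rw [h, lap_C_mul_T]

theorem lap_C_mul (r : Rq) (f : LaurentPolynomial Rq) : Lap g (C r * f) = r * Lap g f := by
  rw [← lap_const_mul]
  refine lap_map_eq_of_monomial g (AddMonoidHom.mulLeft (C r)) _ (fun s n => ?_) f
  rw [AddMonoidHom.coe_mulLeft, ← mul_assoc, ← map_mul, lap_C_mul_T, mul_assoc, mul_left_comm]

theorem lap_T_mul (m : ℤ) (f : LaurentPolynomial Rq) :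
    Lap g (T m * f) = Lap (fun a => g (m + a)) f :=
  lap_map_eq_of_monomial g (AddMonoidHom.mulLeft (T m)) _ (fun r n => by
    rw [AddMonoidHom.coe_mulLeft, mul_left_comm, ← T_add, lap_C_mul_T]) f

theorem lap_invert (f : LaurentPolynomial Rq) : Lap g (invert f) = Lap (fun a => g (-a)) f :=
  lap_map_eq_of_monomial g invert _ (fun r n => by
    rw [map_mul, invert_C, invert_T, lap_C_mul_T]) f

theorem lap_qShift (f : LaurentPolynomial Rq) :
    Lap g (qShift f) = Lap (fun a => T a * g a) f :=
  lap_map_eq_of_monomial g qShift _ (fun r n => by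
    rw [qShift_C_mul_T, lap_C_mul_T, mul_assoc]) f

end Lap

/-- The weights of `f ↦ L_{-1} (f (q^c x))`. -/
noncomputable def gaussWeight (c a : ℤ) : Rq := T (a ^ 2 + c * a)

theorem gaussWeight_zero : gaussWeight 0 = fun a => T (a ^ 2) := by
  ext a
  rw [gaussWeight, zero_mul, add_zero]

section gaussWeight

variable (c : ℤ) (f : LaurentPolynomial Rq)

theorem lap_gaussWeight_T_mul (m : ℤ) :
    Lap (gaussWeight c) (T m * f) = T (m ^ 2 + c * m) * Lap (gaussWeight (c + 2 * m)) f := by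
  rw [lap_T_mul, ← lap_const_mul]
  congr 1
  ext a
  rw [gaussWeight, gaussWeight, ← T_add]
  ring_nf

theorem lap_gaussWeight_T_one_mul :
    Lap (gaussWeight c) (T 1 * f) = T (c + 1) * Lap (gaussWeight (c + 2)) f := by
  rw [lap_gaussWeight_T_mul]
  ring_nf

theorem lap_gaussWeight_T_neg_one_mul :
    Lap (gaussWeight c) (T (-1) * f) = T (1 - c) * Lap (gaussWeight (c - 2)) f := by
  rw [lap_gaussWeight_T_mul]
  ring_nf

theorem lap_gaussWeight_qShift :
    Lap (gaussWeight c) (qShift f) = Lap (gaussWeight (c + 1)) f := by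
  rw [lap_qShift]
  congr 1
  ext a
  rw [gaussWeight, gaussWeight, ← T_add]
  ring_nf

theorem lap_gaussWeight_invert :
    Lap (gaussWeight c) (invert f) = Lap (gaussWeight (-c)) f := by
  rw [lap_invert]
  congr 1
  ext a
  rw [gaussWeight, gaussWeight]
  ring_nf

end gaussWeight

/-- `(x;q)_n (q/x;q)_n`. -/
noncomputable def finiteTheta (n : ℕ) : LaurentPolynomial Rq :=
  ∏ i ∈ range n, (1 - T 1 * C (T (i : ℤ))) * (1 - T (-1) * C (T ((i : ℤ) + 1)))

theorem finiteTheta_succ (n : ℕ) : finiteTheta (n + 1) =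
    finiteTheta n * ((1 - T 1 * C (T (n : ℤ))) * (1 - T (-1) * C (T ((n : ℤ) + 1)))) :=
  prod_range_succ _ n

theorem invert_qShift_finiteTheta (n : ℕ) :
    invert (qShift (finiteTheta n)) = finiteTheta n := by
  rw [finiteTheta, map_prod, map_prod]
  refine prod_congr rfl fun i _ => ?_
  rw [map_mul, map_mul, qShift_one_sub_T_one_mul, qShift_one_sub_T_neg_one_mul]
  simp only [map_mul, map_sub, map_one, invert_T, invert_C, neg_neg]
  ring

theorem finiteTheta_qShift (n : ℕ) :
    (C (T n) - T 1) * qShift (finiteTheta n) = (1 - T 1 * C (T n)) * finiteTheta n := by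
  induction n with
  | zero => simp [finiteTheta]
  | succ n ih =>
    rw [finiteTheta_succ, map_mul, map_mul, qShift_one_sub_T_one_mul,
      qShift_one_sub_T_neg_one_mul]
    push_cast
    linear_combination (1 - T 1 * C (T ((n : ℤ) + 1))) * (1 - T (-1) * C (T ((n : ℤ) + 1))) * ih +
      (1 - T 1 * C (T ((n : ℤ) + 1))) * qShift (finiteTheta n) * (C (T n) - C (T ((n : ℤ) + 1))) *
        T_one_mul_T_neg_one (R := Rq)

theorem prod_mul_prod_eq_mul_finiteTheta (k : ℕ) :
    (∏ i ∈ range (k + 1), (1 - T 1 * C (T (i : ℤ)))) *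
        ∏ i ∈ range (k + 1), (1 - T (-1) * C (T (i : ℤ))) =
      (1 - T (-1)) * (1 - T 1 * C (T k)) * finiteTheta k := by
  rw [prod_range_succ, prod_range_succ', finiteTheta, prod_mul_distrib]
  push_cast
  rw [T_zero, map_one, mul_one]
  ring

noncomputable def thetaMoment (n : ℕ) (c : ℤ) : Rq := Lap (gaussWeight c) (finiteTheta n)

section thetaMoment

variable (n : ℕ)

theorem lap_gaussWeight_finiteTheta (c : ℤ) :
    Lap (gaussWeight c) (finiteTheta n) = thetaMoment n c := rfl

theorem thetaMoment_one_sub (c : ℤ) : thetaMoment n (1 - c) = thetaMoment n c := by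
  conv_rhs => rw [thetaMoment, ← invert_qShift_finiteTheta]
  rw [lap_gaussWeight_invert, lap_gaussWeight_qShift, neg_add_eq_sub, thetaMoment]

theorem thetaMoment_rec (c : ℤ) :
    T n * thetaMoment n (c + 1) - T (c + 1) * thetaMoment n (c + 3) =
      thetaMoment n c - T (c + 1) * (T n * thetaMoment n (c + 2)) := by
  have h := congrArg (Lap (gaussWeight c)) (finiteTheta_qShift n)
  rwa [sub_mul, lap_sub, lap_C_mul, lap_gaussWeight_T_one_mul, lap_gaussWeight_qShift,
    lap_gaussWeight_qShift, add_assoc c 2 1, sub_mul, one_mul, lap_sub, mul_assoc,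
    lap_gaussWeight_T_one_mul, lap_C_mul] at h

theorem thetaMoment_two : thetaMoment n 2 = T n * thetaMoment n 0 := by
  have h := thetaMoment_rec n (-1)
  have h₁ := thetaMoment_one_sub n (-1)
  have h₂ := thetaMoment_one_sub n 1
  norm_num at h h₁ h₂
  have h₃ : (2 : Rq) * (thetaMoment n 2 - T n * thetaMoment n 0) = 0 := by
    linear_combination -h + h₁ - T n * h₂
  exact sub_eq_zero.1 ((mul_eq_zero.1 h₃).resolve_left two_ne_zero)

theorem thetaMoment_three :
    T 1 * thetaMoment n 3 = (T n - 1 + T 1 * T n ^ 2) * thetaMoment n 0 := by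
  have h := thetaMoment_rec n 0
  have h₂ := thetaMoment_one_sub n 1
  norm_num at h h₂
  rw [T_add] at h
  linear_combination -h - T n * h₂ + T n * T 1 * thetaMoment_two n

theorem thetaMoment_neg_two : thetaMoment n (-2) = thetaMoment n 3 :=
  thetaMoment_one_sub n 3

theorem thetaMoment_succ_zero :
    thetaMoment (n + 1) 0 =
      (1 + T ((n : ℤ) + 1)) * (1 - T (2 * (n : ℤ) + 1)) * thetaMoment n 0 := by
  have hΘ : finiteTheta (n + 1) = C (1 + T n * T ((n : ℤ) + 1)) * finiteTheta n -
      C (T n) * (T 1 * finiteTheta n) - C (T ((n : ℤ) + 1)) * (T (-1) * finiteTheta n) := by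
    rw [finiteTheta_succ, map_add, map_one, map_mul]
    linear_combination (C (T n) * C (T ((n : ℤ) + 1)) * finiteTheta n) *
      T_one_mul_T_neg_one (R := Rq)
  rw [thetaMoment, hΘ, lap_sub, lap_sub, lap_C_mul, lap_C_mul, lap_C_mul,
    lap_gaussWeight_T_one_mul, lap_gaussWeight_T_neg_one_mul, lap_gaussWeight_finiteTheta,
    lap_gaussWeight_finiteTheta, lap_gaussWeight_finiteTheta]
  simp only [zero_add, sub_zero, zero_sub]
  rw [T_two_mul_add_one, T_add]
  linear_combination (-(T n * T 1 * T 1)) * thetaMoment_neg_two n -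
    T n * T 1 * thetaMoment_two n - T n * T 1 * thetaMoment_three n

end thetaMoment

theorem one_sub_T_mul_prod_one_sub_T (n : ℕ) :
    (1 - T ((n : ℤ) + 1)) * ∏ j ∈ range (n + 1), (1 - T ((n : ℤ) + 1 + 1 + j) : Rq) =
      (1 - T (2 * (n : ℤ) + 1)) * (1 - T ((n : ℤ) + 1) ^ 2) *
        ∏ j ∈ range n, (1 - T ((n : ℤ) + 1 + j)) := by
  have h := prod_range_succ' (fun j : ℕ => (1 - T ((n : ℤ) + 1 + j) : Rq)) (n + 1)
  rw [prod_range_succ, prod_range_succ] at h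
  push_cast at h
  rw [T_pow]
  ring_nf at h ⊢
  exact h.symm

theorem thetaMoment_zero_eq_prod (n : ℕ) :
    thetaMoment n 0 = ∏ j ∈ range n, (1 - T ((n : ℤ) + 1 + j)) := by
  induction n with
  | zero => simpa [thetaMoment, finiteTheta, gaussWeight] using lap_C_mul_T (gaussWeight 0) 1 0
  | succ n ih =>
    apply mul_left_cancel₀ (one_sub_T_ne_zero (m := (n : ℤ) + 1) (by omega))
    rw [thetaMoment_succ_zero, ih]
    push_cast
    rw [one_sub_T_mul_prod_one_sub_T]
    ring

theorem lap_gaussWeight_prod_mul_prod (k : ℕ) :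
    Lap (gaussWeight 0) ((∏ i ∈ range (k + 1), (1 - T 1 * C (T (i : ℤ)))) *
        ∏ i ∈ range (k + 1), (1 - T (-1) * C (T (i : ℤ)))) =
      2 * (1 - T (2 * (k : ℤ) + 1)) * thetaMoment k 0 := by
  have hP : (1 - T (-1)) * (1 - T 1 * C (T k)) * finiteTheta k =
      C (1 + T k) * finiteTheta k - C (T k) * (T 1 * finiteTheta k) - T (-1) * finiteTheta k := by
    rw [map_add, map_one]
    linear_combination (C (T k) * finiteTheta k) * T_one_mul_T_neg_one (R := Rq)
  rw [prod_mul_prod_eq_mul_finiteTheta, hP, lap_sub, lap_sub, lap_C_mul, lap_C_mul,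
    lap_gaussWeight_T_one_mul, lap_gaussWeight_T_neg_one_mul, lap_gaussWeight_finiteTheta,
    lap_gaussWeight_finiteTheta, lap_gaussWeight_finiteTheta]
  simp only [zero_add, sub_zero, zero_sub, T_two_mul_add_one]
  linear_combination (-T 1) * thetaMoment_neg_two k - T k * T 1 * thetaMoment_two k -
    thetaMoment_three k

/-- Lemma 4.2 (first formula): `L_{-1}((x;q)_{k+1}(x^{-1};q)_{k+1}) = 2 (q^{k+1};q)_{k+1}`,
where `L_{-1}` sends `x^a ↦ q^{a²}`. Here `T 1` is `x` (resp. `q`) in the outer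
(resp. inner, via `C`) Laurent polynomial ring. -/
theorem laplace_neg_one (k : ℕ) :
    Lap (fun a => T (a ^ 2))
        ((∏ i ∈ Finset.range (k + 1), (1 - T 1 * C (T (i : ℤ)))) *
          ∏ i ∈ Finset.range (k + 1), (1 - T (-1) * C (T (i : ℤ)))) =
      2 * ∏ j ∈ Finset.range (k + 1), (1 - T ((k : ℤ) + 1 + j)) := by
  rw [← gaussWeight_zero, lap_gaussWeight_prod_mul_prod, thetaMoment_zero_eq_prod,
    prod_range_succ]
  ring_nf
end

section
/- If n and m are distinct positive integers such that n/m is not an integer power (positive or negative) of any prime p, then the cyclotomic polynomials Φ_n and Φ_m generate the unit ideal in ℤ[v]. -/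
open Polynomial

/-!
Suppose `Φ_n` and `Φ_m` lie in a common maximal ideal `M` of `ℤ[v]`. In the field `ℤ[v]/M`
the class `μ` of `v` is a common root of `Φ_n` and `Φ_m`. In characteristic zero, `μ` is then a
primitive root of unity of order both `n` and `m`, so `n = m`. In characteristic `p`, a root of
`Φ_{p^k a}` with `p ∤ a` is a primitive `a`-th root of unity, so the prime-to-`p` parts of `n`
and `m` coincide and `n / m` is a power of `p`.
-/

theorem Nat.cast_div_eq_zpow_of_ordCompl_eq {K : Type*} [Field K] [CharZero K] {p n m : ℕ}
    (hp : p.Prime) (hm : m ≠ 0) (h : ordCompl[p] n = ordCompl[p] m) :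
    (n : K) / m = (p : K) ^ ((n.factorization p : ℤ) - m.factorization p) := by
  have hp0 : (p : K) ≠ 0 := Nat.cast_ne_zero.mpr hp.ne_zero
  have hc0 : ((ordCompl[p] m : ℕ) : K) ≠ 0 := Nat.cast_ne_zero.mpr (Nat.ordCompl_pos p hm).ne'
  have hn_eq : (n : K) = (p : K) ^ n.factorization p * (ordCompl[p] m : ℕ) := by
    rw [← h]
    exact_mod_cast (Nat.ordProj_mul_ordCompl_eq_self n p).symm
  have hm_eq : (m : K) = (p : K) ^ m.factorization p * (ordCompl[p] m : ℕ) := by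
    exact_mod_cast (Nat.ordProj_mul_ordCompl_eq_self m p).symm
  rw [hn_eq, hm_eq, mul_div_mul_right _ _ hc0, zpow_sub₀ hp0, zpow_natCast, zpow_natCast]

namespace Polynomial

theorem ringHom_cyclotomic_int {R : Type*} [CommRing R] (φ : ℤ[X] →+* R) (n : ℕ) :
    φ (cyclotomic n ℤ) = (cyclotomic n R).eval (φ X) := by
  rw [← map_cyclotomic_int n R, eval_map, ← algebraMap_int_eq]
  exact (eval₂_algebraMap_X _ φ.toIntAlgHom).symm

theorem ne_zero_of_isRoot_cyclotomic {R : Type*} [CommRing R] [Nontrivial R] {n : ℕ} {μ : R}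
    (h : (cyclotomic n R).IsRoot μ) : n ≠ 0 := by
  rintro rfl
  simp at h

theorem isPrimitiveRoot_ordCompl_of_isRoot_cyclotomic {R : Type*} [CommRing R] [IsDomain R]
    {p : ℕ} [hp : Fact p.Prime] [CharP R p] {n : ℕ} {μ : R}
    (h : (cyclotomic n R).IsRoot μ) : IsPrimitiveRoot μ (ordCompl[p] n) := by
  have := NeZero.of_not_dvd R (Nat.not_dvd_ordCompl hp.out (ne_zero_of_isRoot_cyclotomic h))
  rwa [← isRoot_cyclotomic_prime_pow_mul_iff_of_charP (k := n.factorization p),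
    Nat.ordProj_mul_ordCompl_eq_self]

theorem exists_prime_zpow_eq_div_of_isRoot_cyclotomic {K : Type*} [Field K]
    {n m : ℕ} {μ : K} (hn : (cyclotomic n K).IsRoot μ) (hm : (cyclotomic m K).IsRoot μ) :
    ∃ p : ℕ, p.Prime ∧ ∃ e : ℤ, (n : ℚ) / m = (p : ℚ) ^ e := by
  have hn0 := ne_zero_of_isRoot_cyclotomic hn
  have hm0 := ne_zero_of_isRoot_cyclotomic hm
  obtain ⟨q, hchar⟩ := CharP.exists K
  rcases CharP.char_is_prime_or_zero K q with hq | rfl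
  · have := Fact.mk hq
    exact ⟨q, hq, _, Nat.cast_div_eq_zpow_of_ordCompl_eq hq hm0
      ((isPrimitiveRoot_ordCompl_of_isRoot_cyclotomic hn).unique
        (isPrimitiveRoot_ordCompl_of_isRoot_cyclotomic hm))⟩
  · have := CharP.charP_to_charZero K
    rw [isRoot_cyclotomic_iff_charZero (Nat.pos_of_ne_zero hn0)] at hn
    rw [isRoot_cyclotomic_iff_charZero (Nat.pos_of_ne_zero hm0)] at hm
    refine ⟨2, Nat.prime_two, 0, ?_⟩
    rw [hn.unique hm, div_self (Nat.cast_ne_zero.mpr hm0), zpow_zero]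

end Polynomial

theorem cyclotomic_coprime_of_not_adjacent_general (n m : ℕ)
    (h : ∀ p : ℕ, p.Prime → ∀ e : ℤ, (n : ℚ) / (m : ℚ) ≠ (p : ℚ) ^ e) :
    Ideal.span {cyclotomic n ℤ, cyclotomic m ℤ} = (⊤ : Ideal (Polynomial ℤ)) := by
  by_contra hspan
  obtain ⟨M, hM, hle⟩ := Ideal.exists_le_maximal _ hspan
  let := Ideal.Quotient.field M
  have hroot : ∀ k, cyclotomic k ℤ ∈ M →
      (cyclotomic k (ℤ[X] ⧸ M)).IsRoot (Ideal.Quotient.mk M X) := fun k hk => by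
    rwa [IsRoot.def, ← ringHom_cyclotomic_int, Ideal.Quotient.eq_zero_iff_mem]
  obtain ⟨p, hp, e, he⟩ := exists_prime_zpow_eq_div_of_isRoot_cyclotomic
    (hroot n (hle (Ideal.subset_span (by simp)))) (hroot m (hle (Ideal.subset_span (by simp))))
  exact h p hp e he

/-- If `n ≠ m` are positive integers that are not "adjacent", i.e. `n/m` is not an
integer power (positive or negative) of any prime, then `Φ_n` and `Φ_m` generate
the unit ideal in `ℤ[v]`. -/
theorem cyclotomic_coprime_of_not_adjacent (n m : ℕ) (hn : 0 < n) (hm : 0 < m)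
    (hnm : n ≠ m)
    (h : ∀ p : ℕ, p.Prime → ∀ e : ℤ, (n : ℚ) / (m : ℚ) ≠ (p : ℚ) ^ e) :
    Ideal.span {cyclotomic n ℤ, cyclotomic m ℤ} = (⊤ : Ideal (Polynomial ℤ)) :=
  cyclotomic_coprime_of_not_adjacent_general n m h
end

section
/- The Taylor expansion map T : Ẑ[v]₂ → ℤ[[v-1]] is injective, where Ẑ[v]₂ is the inverse limit of ℤ[v^{±1}]/((-v²;-v)_{2n}) over n, and T sends f to its formal power series expansion at v = 1. -/
open LaurentPolynomial Finset

/-- `(-v²;-v)_{2n} = ∏_{i=2}^{2n+1} (1 + (-v)^i)` as a Laurent polynomial in `v`. -/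
noncomputable def P2 (n : ℕ) : LaurentPolynomial ℤ :=
  ∏ i ∈ Finset.range (2 * n), (1 + (-T 1) ^ (i + 2))

/-- `1 + X` is a unit of `ℤ[[X]]`. -/
theorem oneAddX_isUnit : IsUnit (1 + PowerSeries.X : PowerSeries ℤ) := by
  rw [PowerSeries.isUnit_iff_constantCoeff]
  simp

/-- The Taylor expansion `ℤ[v^{±1}] → ℤ[[X]]` at `v = 1`, i.e. the (ring) map
sending `v ↦ 1 + X`; writing `X = v - 1` it is the Taylor series at `v = 1`. -/
noncomputable def taylorLP (f : LaurentPolynomial ℤ) : PowerSeries ℤ :=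
  Finsupp.sum f.coeff fun n c => c • ((oneAddX_isUnit.unit ^ n : (PowerSeries ℤ)ˣ) : PowerSeries ℤ)

/-!
If `g` has vanishing Taylor series, then `(v - 1)^j` divides `g m` for `m ≥ j`. Divisibility
propagates from `Φ_m` to `Φ_{p^k m}` (`p ∤ m`) because `Φ_m^c ≡ Φ_{p^k m} mod p`: once
`Φ_{p^k m}^j` divides some `(-v²;-v)_{2M}`, the compatibility of the sequence puts every late
`g m` into the ideal `(Φ_{p^k m}^j, p^s)` for all `s`, and since `Φ_{p^k m}^j` is monic this
forces `Φ_{p^k m}^j ∣ g m`. Every `Φ_d` with `d ≢ 2 mod 4` is reached from `Φ_1` this way, and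
these are exactly the cyclotomic factors of `(-v²;-v)_{2n}`; being pairwise coprime over `ℚ`,
their powers together give `(-v²;-v)_{2n} ∣ g m` for `m` large, hence `(-v²;-v)_{2n} ∣ g n`.
-/

open Polynomial Filter

theorem Nat.four_dvd_of_dvd_two_mul_of_not_dvd {d n : ℕ} (hn : Even n) (h : d ∣ 2 * n)
    (h' : ¬d ∣ n) : 4 ∣ d := by
  obtain ⟨t, ht⟩ := h
  rcases Nat.even_or_odd t with ⟨u, rfl⟩ | hodd
  · exact absurd ⟨u, by linarith⟩ h'
  · obtain ⟨m, rfl⟩ := hn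
    have hcop : Nat.Coprime (2 ^ 2) t := Nat.Coprime.pow_left 2 (Nat.coprime_two_left.mpr hodd)
    exact hcop.dvd_of_dvd_mul_right ⟨m, by linarith⟩

theorem Nat.exists_prime_pow_mul_eq_of_two_le {d : ℕ} (hd : 2 ≤ d) :
    ∃ p k m, p.Prime ∧ ¬p ∣ m ∧ 0 < k ∧ p ^ k * m = d ∧ m < d ∧ Odd m := by
  set p := d.minFac
  set m := d / p ^ d.factorization p
  have hp : p.Prime := Nat.minFac_prime (by omega)
  have hm : ¬p ∣ m := Nat.not_dvd_ordCompl hp (by omega)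
  have hk := hp.factorization_pos_of_dvd (by omega) (Nat.minFac_dvd d)
  have hpk := Nat.one_lt_pow hk.ne' hp.one_lt
  have hm0 : 0 < m := Nat.ordCompl_pos p (by omega)
  have hd : p ^ d.factorization p * m = d := Nat.ordProj_mul_ordCompl_eq_self d p
  refine ⟨p, _, m, hp, hm, hk, hd, by nlinarith, Nat.odd_iff.mpr ?_⟩
  by_contra h2
  have h2m : 2 ∣ m := by omega
  have hp2 : p = 2 := (Nat.minFac_eq_two_iff d).mpr (h2m.trans (Nat.ordCompl_dvd d p))
  exact hm (hp2 ▸ h2m)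

theorem Int.eq_zero_of_forall_pow_dvd {p z : ℤ} (hp : p.natAbs ≠ 1) (h : ∀ s : ℕ, p ^ s ∣ z) :
    z = 0 := by
  by_contra hz
  obtain ⟨s, hs⟩ := Int.finiteMultiplicity_iff.mpr ⟨hp, hz⟩
  exact hs (h (s + 1))

namespace Polynomial

section LaurentDivisibility

variable {R : Type*} [CommRing R]

theorem isCoprime_X_of_isUnit_coeff_zero {a : R[X]} (h : IsUnit (a.coeff 0)) :
    IsCoprime X a := by
  obtain ⟨q, hq⟩ := X_dvd_iff.mpr (show (a - C (a.coeff 0)).coeff 0 = 0 by simp)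
  rw [show a = C (a.coeff 0) + X * q by rw [← hq]; ring, IsCoprime.add_mul_left_right_iff]
  exact isCoprime_one_right.of_isCoprime_of_dvd_right (h.map C).dvd

theorem toLaurent_dvd_toLaurent_iff {a b : R[X]} (ha : IsCoprime X a) :
    toLaurent a ∣ toLaurent b ↔ a ∣ b := by
  refine ⟨fun ⟨c, hc⟩ => ?_, _root_.map_dvd toLaurent⟩
  obtain ⟨k, c', hc'⟩ := exists_T_pow c
  have hbk : b * X ^ k = a * c' := toLaurent_injective <| by
    rw [map_mul, map_mul, toLaurent_X_pow, hc, hc', mul_assoc]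
  exact (ha.pow_left.symm).dvd_of_dvd_mul_right (hbk ▸ dvd_mul_right a c')

theorem toLaurent_dvd_iff_of_toLaurent_eq_mul_T {a F : R[X]} {f : R[T;T⁻¹]} {N : ℤ}
    (ha : IsCoprime X a) (hF : toLaurent F = f * T N) : toLaurent a ∣ f ↔ a ∣ F := by
  rw [← (isUnit_T N).dvd_mul_right, ← hF, toLaurent_dvd_toLaurent_iff ha]

/-- `u X ≡ 1 mod a`, so `T (-N) ≡ u ^ N`. -/
theorem exists_toLaurent_dvd_sub {a : R[X]} (ha : IsCoprime X a) (f : R[T;T⁻¹]) :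
    ∃ F : R[X], toLaurent a ∣ f - toLaurent F := by
  obtain ⟨u, v, huv⟩ := ha
  obtain ⟨N, F, hF⟩ := exists_T_pow f
  have hXu : a ∣ 1 - (u * X) ^ N := by
    have := sub_dvd_pow_sub_pow 1 (u * X) N
    rw [one_pow, show 1 - u * X = v * a by linear_combination -huv] at this
    exact (dvd_mul_left a v).trans this
  refine ⟨F * u ^ N, ?_⟩
  have : f - toLaurent (F * u ^ N) = f * toLaurent (1 - (u * X) ^ N) := by
    simp only [map_sub, map_one, map_pow, map_mul, toLaurent_X, mul_pow, T_pow, mul_one, hF]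
    ring
  rw [this]
  exact (_root_.map_dvd toLaurent hXu).mul_left f

end LaurentDivisibility

/-- Reduction modulo the monic `Ψ` is `ℤ`-linear, so every coefficient of `F %ₘ Ψ` is
divisible by every power of `p`. -/
theorem dvd_of_forall_dvd_sub_C_pow_mul {Ψ F : ℤ[X]} (hΨ : Ψ.Monic) {p : ℤ} (hp : p.natAbs ≠ 1)
    (h : ∀ s : ℕ, ∃ B, Ψ ∣ F - C p ^ s * B) : Ψ ∣ F := by
  rw [← modByMonic_eq_zero_iff_dvd hΨ]
  ext k
  refine Int.eq_zero_of_forall_pow_dvd hp fun s => ?_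
  obtain ⟨B, hB⟩ := h s
  have : F %ₘ Ψ = C (p ^ s) * (B %ₘ Ψ) := by
    rw [← modByMonic_eq_zero_iff_dvd hΨ, sub_modByMonic, ← C_pow, C_mul', smul_modByMonic,
      sub_eq_zero] at hB
    rw [hB, C_mul']
  rw [this, coeff_C_mul]
  exact dvd_mul_right _ _

theorem toLaurent_dvd_of_forall_mem_span_pow {Ψ : ℤ[X]} (hΨ : Ψ.Monic) (hX : IsCoprime X Ψ)
    {p : ℤ} (hp : p.natAbs ≠ 1) {f : ℤ[T;T⁻¹]}
    (h : ∀ s : ℕ, f ∈ Ideal.span {toLaurent Ψ, (p : ℤ[T;T⁻¹]) ^ s}) : toLaurent Ψ ∣ f := by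
  obtain ⟨F, hF⟩ := exists_toLaurent_dvd_sub hX f
  suffices Ψ ∣ F by simpa using hF.add (_root_.map_dvd toLaurent this)
  refine dvd_of_forall_dvd_sub_C_pow_mul hΨ hp fun s => ?_
  obtain ⟨u, v, huv⟩ := Ideal.mem_span_pair.mp (h s)
  obtain ⟨V, hV⟩ := exists_toLaurent_dvd_sub hX v
  refine ⟨V, (toLaurent_dvd_toLaurent_iff hX).mp ?_⟩
  have : toLaurent (F - C p ^ s * V)
      = u * toLaurent Ψ + (p : ℤ[T;T⁻¹]) ^ s * (v - toLaurent V) - (f - toLaurent F) := by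
    simp only [eq_intCast, map_sub, map_mul, map_pow, map_intCast, ← huv]
    ring
  rw [this]
  exact ((dvd_mul_left _ u).add (hV.mul_left _)).sub hF

theorem C_dvd_cyclotomic_pow_sub_cyclotomic {p m k : ℕ} [Fact p.Prime] (hm : ¬p ∣ m)
    (hk : 0 < k) :
    C (p : ℤ) ∣ cyclotomic m ℤ ^ (p ^ k - p ^ (k - 1)) - cyclotomic (p ^ k * m) ℤ := by
  rw [← Ideal.mem_span_singleton, ← Set.image_singleton, ← Ideal.map_span,
    ← ZMod.ker_intCastRingHom, ← ker_mapRingHom, RingHom.mem_ker, coe_mapRingHom,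
    Polynomial.map_sub, Polynomial.map_pow, map_cyclotomic, map_cyclotomic,
    cyclotomic_mul_prime_pow_eq (ZMod p) hm hk, sub_self]

theorem isCoprime_X_cyclotomic {R : Type*} [CommRing R] (n : ℕ) :
    IsCoprime X (cyclotomic n R) := by
  apply isCoprime_X_of_isUnit_coeff_zero
  rcases lt_trichotomy n 1 with h | rfl | h
  · simp [Nat.lt_one_iff.mp h]
  · simp
  · simp [cyclotomic_coeff_zero R h]

theorem prod_cyclotomic_pow_dvd {s : Finset ℕ} {k : ℕ} {G : ℤ[X]}
    (h : ∀ d ∈ s, cyclotomic d ℤ ^ k ∣ G) : ∏ d ∈ s, cyclotomic d ℤ ^ k ∣ G := by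
  rw [← map_dvd_map (Int.castRingHom ℚ) (RingHom.injective_int _)
    (monic_prod_of_monic _ _ fun d _ => (cyclotomic.monic d ℤ).pow k), Polynomial.map_prod]
  refine prod_dvd_of_coprime (fun d _ d' _ hne => ?_) fun d hd => ?_
  · simpa only [Function.onFun, Polynomial.map_pow, map_cyclotomic]
      using (cyclotomic.isCoprime_rat hne).pow
  · exact Polynomial.map_dvd _ (h d hd)

section Domain

variable {R : Type*} [CommRing R] [IsDomain R]

theorem cyclotomic_two_mul_dvd_X_pow_add_one {n : ℕ} (hn : 0 < n) :
    cyclotomic (2 * n) R ∣ X ^ n + 1 := by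
  have h := X_pow_sub_one_mul_cyclotomic_dvd_X_pow_sub_one_of_dvd R
    (show n ∈ (2 * n).properDivisors by
      simp only [Nat.mem_properDivisors, dvd_mul_left, true_and]; omega)
  rw [show (X : R[X]) ^ (2 * n) - 1 = (X ^ n - 1) * (X ^ n + 1) by ring] at h
  exact (mul_dvd_mul_iff_left (X_pow_sub_C_ne_zero hn 1)).mp h

theorem X_pow_add_one_eq_prod_cyclotomic {n : ℕ} (hn : 0 < n) :
    (X ^ n + 1 : R[X]) = ∏ d ∈ (2 * n).divisors \ n.divisors, cyclotomic d R := by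
  have h := prod_sdiff (f := fun d => cyclotomic d R)
    (Nat.divisors_subset_of_dvd (by omega) (dvd_mul_left n 2))
  rw [prod_cyclotomic_eq_X_pow_sub_one hn, prod_cyclotomic_eq_X_pow_sub_one (by omega),
    show (X : R[X]) ^ (2 * n) - 1 = (X ^ n + 1) * (X ^ n - 1) by ring] at h
  exact (mul_right_cancel₀ (X_pow_sub_C_ne_zero hn 1) h).symm

theorem exists_cyclotomic_dvd_one_add_neg_X_pow {d : ℕ} (hd0 : 0 < d) (hd : d % 4 ≠ 2) :
    ∃ i, 0 < i ∧ cyclotomic d R ∣ 1 + (-X) ^ i := by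
  rcases Nat.even_or_odd d with ⟨i, rfl⟩ | hodd
  · refine ⟨i, by omega, ?_⟩
    rw [(Nat.even_iff.mpr (by omega) : Even i).neg_pow, add_comm (1 : R[X]), ← two_mul]
    exact cyclotomic_two_mul_dvd_X_pow_add_one (by omega)
  · refine ⟨d, hd0, ?_⟩
    rw [hodd.neg_pow, show (1 : R[X]) + -X ^ d = -(X ^ d - 1) by ring, dvd_neg]
    exact cyclotomic.dvd_X_pow_sub_one d R

theorem one_add_neg_X_pow_dvd_prod_cyclotomic {i N : ℕ} (hi : 0 < i) (hN : 2 * i < N) :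
    (1 + (-X) ^ i : R[X]) ∣ ∏ d ∈ (range N).filter (· % 4 ≠ 2), cyclotomic d R := by
  rcases Nat.even_or_odd i with heven | hodd
  · rw [heven.neg_pow, add_comm, X_pow_add_one_eq_prod_cyclotomic hi]
    refine prod_dvd_prod_of_subset _ _ _ fun d hd => ?_
    obtain ⟨h2i, hni⟩ := mem_sdiff.mp hd
    have hle := Nat.divisor_le h2i
    have h4 := Nat.four_dvd_of_dvd_two_mul_of_not_dvd heven (Nat.dvd_of_mem_divisors h2i)
      fun h => hni (Nat.mem_divisors.mpr ⟨h, hi.ne'⟩)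
    simp only [mem_filter, mem_range]
    omega
  · rw [hodd.neg_pow, show (1 : R[X]) + -X ^ i = -(X ^ i - 1) by ring, neg_dvd,
      ← prod_cyclotomic_eq_X_pow_sub_one hi]
    refine prod_dvd_prod_of_subset _ _ _ fun d hd => ?_
    have hle := Nat.divisor_le hd
    have hd' := Nat.odd_iff.mp (hodd.of_dvd_nat (Nat.dvd_of_mem_divisors hd))
    simp only [mem_filter, mem_range]
    omega

end Domain

end Polynomial

section CauchySequence

variable {A : Type*} [CommRing A] {P g : ℕ → A}

theorem dvd_sub_of_dvd_succ_sub (hP : ∀ ⦃m n⦄, m ≤ n → P m ∣ P n) (hg : ∀ n, P n ∣ g (n + 1) - g n)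
    {m n : ℕ} (h : m ≤ n) : P m ∣ g n - g m := by
  induction n, h using Nat.le_induction with
  | base => simp
  | succ n hmn ih => simpa using ((hP hmn).trans (hg n)).add ih

theorem mem_span_pow_of_pow_eq_add_mul {a b π h : A} {c j M m : ℕ} (hb : b ^ c = a + π * h)
    (hbg : ∀ k, ∀ᶠ m in atTop, b ^ k ∣ g m) (hag : ∀ m ≥ M, a ^ j ∣ g m - g M) (hm : M ≤ m)
    (s : ℕ) : g m ∈ Ideal.span {a ^ j, π ^ s} := by
  set I := Ideal.span {a ^ j, π ^ s}
  have hbI : b ^ (c * (j + s - 1)) ∈ I := by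
    rw [pow_mul, hb]
    refine I.add_pow_add_pred_mem_of_pow_mem (Ideal.subset_span (by simp)) ?_
    rw [mul_pow]
    exact I.mul_mem_right _ (Ideal.subset_span (by simp))
  obtain ⟨m', hbm', hmm'⟩ := ((hbg _).and (eventually_ge_atTop m)).exists
  have hdiff : a ^ j ∣ g m' - g m := by simpa using (hag m' (hm.trans hmm')).sub (hag m hm)
  simpa using I.sub_mem (I.mem_of_dvd hbm' hbI)
    (I.mem_of_dvd hdiff (Ideal.subset_span (by simp)))

end CauchySequence

noncomputable def P2Poly (n : ℕ) : ℤ[X] :=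
  ∏ i ∈ range (2 * n), (1 + (-X) ^ (i + 2))

theorem toLaurent_P2Poly (n : ℕ) : toLaurent (P2Poly n) = P2 n := by
  simp [P2Poly, P2]

theorem P2_dvd_P2 {m n : ℕ} (h : m ≤ n) : P2 m ∣ P2 n :=
  prod_dvd_prod_of_subset _ _ _ (range_subset_range.mpr (by omega))

theorem isCoprime_X_P2Poly (n : ℕ) : IsCoprime X (P2Poly n) :=
  isCoprime_X_of_isUnit_coeff_zero (by simp [P2Poly, coeff_zero_eq_eval_zero, eval_prod])

theorem P2Poly_dvd_prod_cyclotomic_pow (n : ℕ) :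
    P2Poly n ∣ ∏ d ∈ (range (4 * n + 3)).filter (· % 4 ≠ 2), cyclotomic d ℤ ^ (2 * n) := by
  rw [prod_pow, ← card_range (2 * n), ← prod_const, P2Poly]
  exact prod_dvd_prod_of_dvd _ _ fun i hi =>
    one_add_neg_X_pow_dvd_prod_cyclotomic (by omega) (by simp only [mem_range] at hi; omega)

theorem exists_cyclotomic_pow_dvd_P2Poly {d : ℕ} (hd : d % 4 ≠ 2) (j : ℕ) :
    ∃ M, cyclotomic d ℤ ^ j ∣ P2Poly M := by
  rcases Nat.eq_zero_or_pos d with rfl | hd0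
  · exact ⟨0, by simp⟩
  obtain ⟨i, hi, hdvd⟩ := exists_cyclotomic_dvd_one_add_neg_X_pow (R := ℤ) hd0 hd
  have hodd (t : ℕ) : cyclotomic d ℤ ∣ 1 + (-X) ^ (i * (2 * t + 3)) := by
    have := Odd.add_dvd_pow_add_pow 1 ((-X : ℤ[X]) ^ i) (n := 2 * t + 3) ⟨t + 1, by ring⟩
    rw [one_pow, ← pow_mul] at this
    exact hdvd.trans this
  have hinj : Set.InjOn (fun t => i * (2 * t + 3)) (range j) := fun a _ b _ h => by
    have := Nat.eq_of_mul_eq_mul_left hi h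
    omega
  refine ⟨i * (2 * j + 3), ?_⟩
  calc cyclotomic d ℤ ^ j = ∏ t ∈ range j, cyclotomic d ℤ := by simp
    _ ∣ ∏ t ∈ range j, (1 + (-X) ^ (i * (2 * t + 3))) :=
      prod_dvd_prod_of_dvd _ _ fun t _ => hodd t
    _ = ∏ k ∈ (range j).image (fun t => i * (2 * t + 3)), (1 + (-X) ^ k) :=
      (prod_image (f := fun k => 1 + (-X : ℤ[X]) ^ k) hinj).symm
    _ ∣ ∏ k ∈ Ico 2 (2 * (i * (2 * j + 3)) + 2), (1 + (-X) ^ k) :=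
      prod_dvd_prod_of_subset _ _ _ ?_
    _ = P2Poly _ := by rw [prod_Ico_eq_prod_range, P2Poly]; simp [add_comm]
  intro k hk
  simp only [mem_image, mem_range, mem_Ico] at hk ⊢
  obtain ⟨t, ht, rfl⟩ := hk
  constructor <;> nlinarith

noncomputable def taylorHom : ℤ[T;T⁻¹] →+* PowerSeries ℤ :=
  LaurentPolynomial.eval₂ (Int.castRingHom _) oneAddX_isUnit.unit

theorem taylorHom_eq_taylorLP (f : ℤ[T;T⁻¹]) : taylorHom f = taylorLP f := by
  induction f using LaurentPolynomial.induction_on' with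
  | add p q hp hq =>
    rw [map_add, hp, hq]
    exact (smeval_add p q _).symm
  | C_mul_T n a =>
    rw [taylorHom, eval₂_C_mul_T, eq_intCast, ← zsmul_eq_mul]
    exact (smeval_C_mul_T_n _ n a).symm

theorem taylorHom_toLaurent (F : ℤ[X]) :
    taylorHom (toLaurent F) = (F.comp (X + Polynomial.C 1) : PowerSeries ℤ) := by
  rw [taylorHom, eval₂_toLaurent, comp, ← coeToPowerSeries.ringHom_apply, hom_eval₂,
    RingHom.ext_int ((coeToPowerSeries.ringHom).comp Polynomial.C) (Int.castRingHom _)]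
  congr 1
  simp [add_comm]

theorem toLaurent_X_sub_one_pow_dvd_of_X_pow_dvd_taylorLP {f : ℤ[T;T⁻¹]} {m : ℕ}
    (h : PowerSeries.X ^ m ∣ taylorLP f) : toLaurent ((X - 1 : ℤ[X]) ^ m) ∣ f := by
  obtain ⟨N, F, hF⟩ := exists_T_pow f
  have hcop : IsCoprime X ((X - 1 : ℤ[X]) ^ m) :=
    (isCoprime_X_of_isUnit_coeff_zero (by simp)).pow_right
  rw [toLaurent_dvd_iff_of_toLaurent_eq_mul_T hcop hF, ← Polynomial.C_1, X_sub_C_pow_dvd_iff,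
    X_pow_dvd_iff]
  have hF' : PowerSeries.X ^ m ∣ (F.comp (X + Polynomial.C 1) : PowerSeries ℤ) := by
    rw [← taylorHom_toLaurent, hF, map_mul, taylorHom_eq_taylorLP]
    exact h.mul_right _
  intro d hd
  simpa using PowerSeries.X_pow_dvd_iff.mp hF' d hd

theorem eventually_cyclotomic_pow_dvd {g : ℕ → ℤ[T;T⁻¹]}
    (hcompat : ∀ n, P2 n ∣ g (n + 1) - g n)
    (hTaylor : ∀ n, (PowerSeries.X : PowerSeries ℤ) ^ (n + 1) ∣ taylorLP (g n))
    {d : ℕ} (hd : d % 4 ≠ 2) (j : ℕ) : ∀ᶠ m in atTop, toLaurent (cyclotomic d ℤ ^ j) ∣ g m := by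
  induction d using Nat.strong_induction_on generalizing j with
  | _ d ih =>
  obtain rfl | rfl | hd2 : d = 0 ∨ d = 1 ∨ 2 ≤ d := by omega
  · simp
  · filter_upwards [eventually_ge_atTop j] with m hm
    rw [cyclotomic_one]
    exact (_root_.map_dvd _ (pow_dvd_pow _ (by omega))).trans
      (toLaurent_X_sub_one_pow_dvd_of_X_pow_dvd_taylorLP (hTaylor m))
  obtain ⟨p, k, m₀, hp, hpm, hk, rfl, hlt, hodd⟩ := Nat.exists_prime_pow_mul_eq_of_two_le hd2
  have := Fact.mk hp
  obtain ⟨h, hh⟩ := C_dvd_cyclotomic_pow_sub_cyclotomic hpm hk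
  obtain ⟨M, hM⟩ := exists_cyclotomic_pow_dvd_P2Poly hd j
  filter_upwards [eventually_ge_atTop M] with m hm
  refine toLaurent_dvd_of_forall_mem_span_pow ((cyclotomic.monic _ ℤ).pow j)
    (isCoprime_X_cyclotomic _).pow_right (p := p) (by simpa using hp.one_lt.ne') fun s => ?_
  rw [map_pow]
  refine mem_span_pow_of_pow_eq_add_mul (b := toLaurent (cyclotomic m₀ ℤ)) (h := toLaurent h)
    (c := p ^ k - p ^ (k - 1)) ?_
    (fun k => by simpa only [map_pow] using ih m₀ hlt (by rw [Nat.odd_iff] at hodd; omega) k)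
    (fun m' hm' => ?_) hm s
  · have := congrArg toLaurent hh
    rw [map_sub, map_pow, map_mul, toLaurent_C, eq_intCast] at this
    linear_combination this
  · rw [← map_pow]
    exact (_root_.map_dvd toLaurent hM).trans
      (toLaurent_P2Poly M ▸ dvd_sub_of_dvd_succ_sub (fun _ _ => P2_dvd_P2) hcompat hm')

theorem eventually_P2_dvd {g : ℕ → ℤ[T;T⁻¹]} (hcompat : ∀ n, P2 n ∣ g (n + 1) - g n)
    (hTaylor : ∀ n, (PowerSeries.X : PowerSeries ℤ) ^ (n + 1) ∣ taylorLP (g n)) (n : ℕ) :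
    ∀ᶠ m in atTop, P2 n ∣ g m := by
  have hB := (eventually_all_finset ((range (4 * n + 3)).filter (· % 4 ≠ 2))).mpr
    fun d hd => eventually_cyclotomic_pow_dvd hcompat hTaylor (mem_filter.mp hd).2 (2 * n)
  filter_upwards [hB] with m hm
  obtain ⟨N, G, hG⟩ := exists_T_pow (g m)
  rw [← toLaurent_P2Poly, toLaurent_dvd_iff_of_toLaurent_eq_mul_T (isCoprime_X_P2Poly n) hG]
  exact (P2Poly_dvd_prod_cyclotomic_pow n).trans <| prod_cyclotomic_pow_dvd fun d hd =>
    (toLaurent_dvd_iff_of_toLaurent_eq_mul_T (isCoprime_X_cyclotomic d).pow_right hG).mp (hm d hd)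

/-- Injectivity of the Taylor map `T : Ẑ[v]₂ → ℤ[[v-1]]`, where
`Ẑ[v]₂ = lim← ℤ[v^{±1}]/((-v²;-v)_{2n})`.  An element of the inverse limit is
represented by a sequence `g : ℕ → ℤ[v^{±1}]` with `g (n+1) ≡ g n mod (-v²;-v)_{2n}`;
its Taylor series vanishes iff `taylorLP (g n) ≡ 0 mod X^(n+1)` for all `n` (note
`X^(n+1) ∣ taylorLP (P2 n)`), and the element is `0` iff `(-v²;-v)_{2n} ∣ g n` for
all `n`.  So injectivity reads: -/
theorem taylor_injective_on_habiro_like_ring (g : ℕ → LaurentPolynomial ℤ)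
    (hcompat : ∀ n, P2 n ∣ (g (n + 1) - g n))
    (hTaylor : ∀ n, (PowerSeries.X : PowerSeries ℤ) ^ (n + 1) ∣ taylorLP (g n)) :
    ∀ n, P2 n ∣ g n := by
  intro n
  obtain ⟨m, hdvd, hnm⟩ :=
    ((eventually_P2_dvd hcompat hTaylor n).and (eventually_ge_atTop n)).exists
  simpa using hdvd.sub (dvd_sub_of_dvd_succ_sub (fun _ _ => P2_dvd_P2) hcompat hnm)
end

section
/- The sequence of ideals ((q;q)_n) in ℤ[q], n ∈ ℕ, is cofinal with the directed family of principal ideals generated by finite products of cyclotomic polynomials Φ_m(q), m ∈ ℕ; consequently the Habiro ring lim← ℤ[q]/((q;q)_n) is isomorphic to the cyclotomic completion ℤ[q]^ℕ = lim←_{f ∈ Φ*_ℕ} ℤ[q]/(f). -/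
set_option maxHeartbeats 1000000
set_option synthInstance.maxHeartbeats 400000

open Polynomial Finset

/-- `(q;q)_n = ∏_{i=1}^n (1 - q^i)` in `ℤ[q]`. -/
noncomputable def poch (n : ℕ) : Polynomial ℤ :=
  ∏ i ∈ Finset.range n, (1 - X ^ (i + 1))

noncomputable def pochIdeal (n : ℕ) : Ideal (Polynomial ℤ) := Ideal.span {poch n}

theorem pochIdeal_antitone {m n : ℕ} (h : m ≤ n) : pochIdeal n ≤ pochIdeal m :=
  Ideal.span_singleton_le_span_singleton.mpr
    (Finset.prod_dvd_prod_of_subset _ _ _ (Finset.range_subset_range.mpr h))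

/-- The Habiro ring `lim← ℤ[q]/((q;q)_n)` as the subring of compatible sequences. -/
noncomputable def HabiroLimit : Subring (Π n : ℕ, Polynomial ℤ ⧸ pochIdeal n) where
  carrier := {x | ∀ m n (h : m ≤ n),
    Ideal.Quotient.factor (pochIdeal_antitone h) (x n) = x m}
  one_mem' := by intro m n h; simp
  mul_mem' := by intro a b ha hb m n h; simp [Pi.mul_apply, map_mul, ha m n h, hb m n h]
  add_mem' := by intro a b ha hb m n h; simp [Pi.add_apply, map_add, ha m n h, hb m n h]
  zero_mem' := by intro m n h; simp
  neg_mem' := by intro a ha m n h; simp [Pi.neg_apply, map_neg, ha m n h]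

/-- `f` belongs to the multiplicative set `Φ*_ℕ` generated by the cyclotomic
polynomials `Φ_m(q)`, `m ∈ ℕ`. -/
def IsCycProd (f : Polynomial ℤ) : Prop :=
  ∃ m : ℕ →₀ ℕ, f = m.prod fun i e => (cyclotomic i ℤ) ^ e

/-- The cyclotomic completion `ℤ[q]^ℕ = lim←_{f ∈ Φ*_ℕ} ℤ[q]/(f)` as the subring of
compatible families indexed by `Φ*_ℕ` directed by divisibility. -/
noncomputable def CycLimit :
    Subring (Π f : {f : Polynomial ℤ // IsCycProd f}, Polynomial ℤ ⧸ Ideal.span {f.1}) where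
  carrier := {x | ∀ (f g : {f : Polynomial ℤ // IsCycProd f}) (h : f.1 ∣ g.1),
    Ideal.Quotient.factor (S := Ideal.span {g.1}) (T := Ideal.span {f.1})
      (Ideal.span_singleton_le_span_singleton.mpr h) (x g) = x f}
  one_mem' := by intro f g h; simp
  mul_mem' := by intro a b ha hb f g h; simp [Pi.mul_apply, map_mul, ha f g h, hb f g h]
  add_mem' := by intro a b ha hb f g h; simp [Pi.add_apply, map_add, ha f g h, hb f g h]
  zero_mem' := by intro f g h; simp
  neg_mem' := by intro a ha f g h; simp [Pi.neg_apply, map_neg, ha f g h]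

/-!
Expanding `1 - q^k = -∏_{d ∣ k} Φ_d` gives `(q;q)_n = ±∏_{d ≤ n} Φ_d^⌊n/d⌋`. Hence `(q;q)_n`
divides `∏_{k ≤ n} (q^k - 1) ∈ Φ*_ℕ`, and `∏ Φ_d^{e_d}` divides `(q;q)_n` as soon as `d e_d ≤ n`
for all `d`. Over mutually cofinal directed families of ideals the inverse limits agree: a
compatible family is transported by reducing any component at a finer ideal, which by
directedness does not depend on the choice.
-/

section CompatibleFamilies

variable {R ι κ : Type*} [CommRing R]

/-- The inverse limit of the quotients `R ⧸ I i`; `r i j` records that `I j ≤ I i` is one of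
the transition maps. -/
def compatibleFamilies (r : ι → ι → Prop) (I : ι → Ideal R)
    (hI : ∀ i j, r i j → I j ≤ I i) : Subring (Π i, R ⧸ I i) where
  carrier := {x | ∀ i j (h : r i j), Ideal.Quotient.factor (hI i j h) (x j) = x i}
  one_mem' := by intro i j h; simp
  mul_mem' := by intro a b ha hb i j h; simp [ha i j h, hb i j h]
  add_mem' := by intro a b ha hb i j h; simp [ha i j h, hb i j h]
  zero_mem' := by intro i j h; simp
  neg_mem' := by intro a ha i j h; simp [ha i j h]

namespace compatibleFamilies

variable {r : ι → ι → Prop} {I : ι → Ideal R} {hI : ∀ i j, r i j → I j ≤ I i}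
  {s : κ → κ → Prop} {J : κ → Ideal R} {hJ : ∀ k l, s k l → J l ≤ J k}

theorem factor_eq_factor [IsDirected ι r] {x : Π i, R ⧸ I i}
    (hx : x ∈ compatibleFamilies r I hI) {K : Ideal R} {i i' : ι} (h : I i ≤ K) (h' : I i' ≤ K) :
    Ideal.Quotient.factor h (x i) = Ideal.Quotient.factor h' (x i') := by
  obtain ⟨j, hij, hi'j⟩ := directed_of r i i'
  rw [← hx i j hij, ← hx i' j hi'j, Ideal.Quotient.factor_comp_apply,
    Ideal.Quotient.factor_comp_apply]

theorem factor_eq_of_le [IsDirected ι r] {x : Π i, R ⧸ I i}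
    (hx : x ∈ compatibleFamilies r I hI) {i i' : ι} (h : I i' ≤ I i) :
    Ideal.Quotient.factor h (x i') = x i := by
  simpa using factor_eq_factor hx h le_rfl

noncomputable def map [IsDirected ι r] (hcofinal : ∀ k, ∃ i, I i ≤ J k) :
    compatibleFamilies r I hI →+* compatibleFamilies s J hJ :=
  RingHom.codRestrict
    (RingHom.pi fun k => (Ideal.Quotient.factor (hcofinal k).choose_spec).comp
      ((Pi.evalRingHom _ (hcofinal k).choose).comp (compatibleFamilies r I hI).subtype))
    _ fun x k l hkl =>
      (Ideal.Quotient.factor_comp_apply (hcofinal l).choose_spec (hJ k l hkl) _).trans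
        (factor_eq_factor x.2 _ (hcofinal k).choose_spec)

theorem map_apply [IsDirected ι r] (hcofinal : ∀ k, ∃ i, I i ≤ J k)
    (x : compatibleFamilies r I hI) {k : κ} {i : ι} (h : I i ≤ J k) :
    (map (hJ := hJ) hcofinal x).1 k = Ideal.Quotient.factor h (x.1 i) :=
  (factor_eq_factor x.2 (hcofinal k).choose_spec h :)

theorem map_comp_map [IsDirected ι r] [IsDirected κ s] (hIJ : ∀ k, ∃ i, I i ≤ J k)
    (hJI : ∀ i, ∃ k, J k ≤ I i) :
    (map (hI := hJ) (hJ := hI) hJI).comp (map hIJ) = RingHom.id _ := by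
  ext x : 1
  refine Subtype.ext (funext fun i => ?_)
  obtain ⟨k, hki⟩ := hJI i
  obtain ⟨i', hi'k⟩ := hIJ k
  rw [RingHom.comp_apply, map_apply hJI _ hki, map_apply hIJ _ hi'k,
    Ideal.Quotient.factor_comp_apply, factor_eq_of_le x.2]
  rfl

noncomputable def equivOfCofinal [IsDirected ι r] [IsDirected κ s]
    (hIJ : ∀ k, ∃ i, I i ≤ J k) (hJI : ∀ i, ∃ k, J k ≤ I i) :
    compatibleFamilies r I hI ≃+* compatibleFamilies s J hJ :=
  RingEquiv.ofRingHom (map hIJ) (map hJI) (map_comp_map hJI hIJ) (map_comp_map hIJ hJI)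

end compatibleFamilies

end CompatibleFamilies

namespace IsCycProd

theorem mul {f g : Polynomial ℤ} (hf : IsCycProd f) (hg : IsCycProd g) : IsCycProd (f * g) := by
  obtain ⟨m, rfl⟩ := hf
  obtain ⟨m', rfl⟩ := hg
  exact ⟨m + m', (Finsupp.prod_add_index' (fun _ => pow_zero _) fun _ _ _ => pow_add _ _ _).symm⟩

theorem prod {ι : Type*} (s : Finset ι) {g : ι → Polynomial ℤ} (h : ∀ i ∈ s, IsCycProd (g i)) :
    IsCycProd (∏ i ∈ s, g i) :=
  Finset.prod_induction g IsCycProd (fun _ _ => mul) ⟨0, by simp⟩ h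

theorem X_pow_sub_one {k : ℕ} (hk : 0 < k) : IsCycProd (X ^ k - 1) := by
  rw [← prod_cyclotomic_eq_X_pow_sub_one hk]
  exact prod _ fun i _ => ⟨Finsupp.single i 1, by simp⟩

end IsCycProd

theorem exists_isCycProd_poch_dvd (n : ℕ) : ∃ f, IsCycProd f ∧ poch n ∣ f :=
  ⟨∏ i ∈ range n, (X ^ (i + 1) - 1), IsCycProd.prod _ fun i _ => .X_pow_sub_one i.add_one_pos,
    prod_dvd_prod_of_dvd _ _ fun _ _ => ⟨-1, by ring⟩⟩

theorem poch_eq_neg_one_pow_mul_prod_cyclotomic (n : ℕ) :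
    poch n = (-1) ^ n * ∏ d ∈ range (n + 1), cyclotomic d ℤ ^ (n / d) := by
  have hfactor (i : ℕ) : (1 - X ^ (i + 1) : Polynomial ℤ) =
      -1 * ∏ d ∈ (i + 1).divisors, cyclotomic d ℤ := by
    rw [prod_cyclotomic_eq_X_pow_sub_one i.add_one_pos]
    ring
  rw [poch, prod_congr rfl fun i _ => hfactor i, prod_mul_distrib, prod_const, card_range,
    prod_comm' (t' := range (n + 1)) (s' := fun d => {i ∈ range n | d ∣ i + 1})]
  · simp_rw [prod_const, Nat.card_multiples]
  · intro i d
    simp only [mem_range, Nat.mem_divisors, mem_filter]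
    constructor
    · rintro ⟨hi, hd, -⟩
      exact ⟨⟨hi, hd⟩, by have := Nat.le_of_dvd i.add_one_pos hd; omega⟩
    · rintro ⟨⟨hi, hd⟩, -⟩
      exact ⟨hi, hd, i.add_one_ne_zero⟩

theorem IsCycProd.exists_dvd_poch {f : Polynomial ℤ} (hf : IsCycProd f) : ∃ n, f ∣ poch n := by
  obtain ⟨m, rfl⟩ := hf
  set n := m.support.sup fun i => i * m i
  have hle {i : ℕ} (hi : i ∈ m.support) : i * m i ≤ n := le_sup (f := fun i => i * m i) hi
  refine ⟨n, ?_⟩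
  rw [poch_eq_neg_one_pow_mul_prod_cyclotomic]
  refine dvd_mul_of_dvd_right ((prod_dvd_prod_of_dvd _ _ fun i hi => ?_).trans
    (prod_dvd_prod_of_subset _ _ (fun i => cyclotomic i ℤ ^ (n / i)) fun i hi => ?_)) _
  · rcases Nat.eq_zero_or_pos i with rfl | hpos
    -- `Φ₀ = 1`, while the exponent `n / 0` is `0`
    · simp [cyclotomic_zero]
    · exact pow_dvd_pow _ ((Nat.le_div_iff_mul_le hpos).2 (mul_comm i _ ▸ hle hi))
  · have hpos : 0 < m i := Nat.pos_of_ne_zero (Finsupp.mem_support_iff.1 hi)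
    exact mem_range.2 (Nat.lt_succ_of_le ((Nat.le_mul_of_pos_right i hpos).trans (hle hi)))

/-- The ideals `((q;q)_n)` are cofinal with the principal ideals generated by finite
products of cyclotomic polynomials; consequently the Habiro ring is isomorphic to
the cyclotomic completion `ℤ[q]^ℕ`. -/
theorem habiro_ring_eq_cyclotomic_completion :
    (∀ n : ℕ, ∃ f : Polynomial ℤ, IsCycProd f ∧ poch n ∣ f) ∧
    (∀ f : Polynomial ℤ, IsCycProd f → ∃ n : ℕ, f ∣ poch n) ∧
    Nonempty (HabiroLimit ≃+* CycLimit) := by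
  have : IsDirected {f : Polynomial ℤ // IsCycProd f} (fun f g => f.1 ∣ g.1) :=
    ⟨fun f g => ⟨⟨f.1 * g.1, f.2.mul g.2⟩, dvd_mul_right _ _, dvd_mul_left _ _⟩⟩
  refine ⟨exists_isCycProd_poch_dvd, fun _ hf => hf.exists_dvd_poch, ⟨?_⟩⟩
  refine compatibleFamilies.equivOfCofinal (fun f => ?_) (fun n => ?_)
  · obtain ⟨n, hn⟩ := f.2.exists_dvd_poch
    exact ⟨n, Ideal.span_singleton_le_span_singleton.mpr hn⟩
  · obtain ⟨f, hf, hn⟩ := exists_isCycProd_poch_dvd n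
    exact ⟨⟨f, hf⟩, Ideal.span_singleton_le_span_singleton.mpr hn⟩
end

section
/- Let S = {n ∈ ℕ : n ≢ 2 mod 4} and write S as the disjoint union of S_k = {2^k(2n+1) : n ∈ ℕ} over k ∈ ℕ, k ≠ 1. Then the cyclotomic completion Γ^S of Γ = ℤ[1/2][v] decomposes as a direct product: Γ^S ≅ ∏_{k ∈ ℕ, k≠1} Γ^{S_k}. -/
set_option maxHeartbeats 1000000
set_option synthInstance.maxHeartbeats 400000

open Polynomial Finset

/-- `f` belongs to the multiplicative set `Φ*_S` generated by the cyclotomic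
polynomials `Φ_n`, `n ∈ S`, in `R[v]`. -/
def IsCycProdIn (R : Type) [CommRing R] (S : Set ℕ) (f : Polynomial R) : Prop :=
  ∃ m : ℕ →₀ ℕ, (↑m.support : Set ℕ) ⊆ S ∧ f = m.prod fun i e => (cyclotomic i R) ^ e

/-- The cyclotomic completion `R[v]^S = lim←_{f ∈ Φ*_S} R[v]/(f)`, realized as the
subring of compatible families indexed by `Φ*_S` directed by divisibility. -/
noncomputable def CycCompletion (R : Type) [CommRing R] (S : Set ℕ) :
    Subring (Π f : {f : Polynomial R // IsCycProdIn R S f}, Polynomial R ⧸ Ideal.span {f.1}) where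
  carrier := {x | ∀ (f g : {f : Polynomial R // IsCycProdIn R S f}) (h : f.1 ∣ g.1),
    Ideal.Quotient.factor
      (Ideal.span_singleton_le_span_singleton.mpr h : Ideal.span {g.1} ≤ Ideal.span {f.1}) (x g) = x f}
  one_mem' := by intro f g h; simp
  mul_mem' := by intro a b ha hb f g h; simp [Pi.mul_apply, map_mul, ha f g h, hb f g h]
  add_mem' := by intro a b ha hb f g h; simp [Pi.add_apply, map_add, ha f g h, hb f g h]
  zero_mem' := by intro f g h; simp
  neg_mem' := by intro a ha f g h; simp [Pi.neg_apply, map_neg, ha f g h]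

/-! Over a ring in which `2` is invertible, `Φ_{2^k a}` and `Φ_{2^l b}` (`a`, `b` odd, `k ≠ l`) are
coprime: modulo a maximal ideal containing both, `v` would be a primitive root of unity of orders
`2^k c` and `2^l d` with `c`, `d` odd, since a residue characteristic `p ≠ 2` only strips the
`p`-part off the order. Hence every `f ∈ Φ*_S` is a product of pairwise coprime `f_k ∈ Φ*_{S_k}`,
every `g ∈ Φ*_{S_k}` dividing `f` divides `f_k`, and the Chinese remainder theorem for
`R[v]/(f) → ∏ₖ R[v]/(f_k)` makes restriction `Γ^S → ∏ₖ Γ^{S_k}` bijective. -/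

namespace Nat

lemma two_pow_mul_odd_mod_four_eq_two_iff {k c : ℕ} (hc : Odd c) : 2 ^ k * c % 4 = 2 ↔ k = 1 := by
  obtain ⟨j, rfl⟩ := hc
  rcases k with _ | _ | k
  · omega
  · omega
  · rw [show 2 ^ (k + 2) * (2 * j + 1) = 4 * (2 ^ k * (2 * j + 1)) by ring]
    omega

lemma padicValNat_two_pow_mul_odd {k c : ℕ} (hc : Odd c) : padicValNat 2 (2 ^ k * c) = k := by
  rw [padicValNat.mul (by positivity) hc.pos.ne', padicValNat.prime_pow,
    padicValNat.eq_zero_of_not_dvd hc.not_two_dvd_nat, add_zero]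

end Nat

lemma Polynomial.exists_odd_isPrimitiveRoot_of_isRoot_cyclotomic {K : Type*} [CommRing K] [IsDomain K]
    (h2 : (2 : K) ≠ 0) {k a : ℕ} (ha : Odd a) {μ : K} (hμ : (cyclotomic (2 ^ k * a) K).IsRoot μ) :
    ∃ c, Odd c ∧ IsPrimitiveRoot μ (2 ^ k * c) := by
  rcases CharP.char_is_prime_or_zero K (ringChar K) with hp | hp
  · set p := ringChar K
    have : Fact p.Prime := ⟨hp⟩
    have hp2 : ¬ p ∣ 2 ^ k := fun h => h2 <| by
      have hp_eq : p = 2 := (Nat.prime_dvd_prime_iff_eq hp Nat.prime_two).mp (hp.dvd_of_dvd_pow h)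
      have : (p : K) = 0 := ringChar.Nat.cast_ringChar
      rwa [hp_eq, Nat.cast_ofNat] at this
    obtain ⟨e, c, hpc, rfl⟩ := Nat.exists_eq_pow_mul_and_not_dvd ha.pos.ne' p hp.one_lt.ne'
    have : NeZero ((2 ^ k * c : ℕ) : K) :=
      ⟨(ringChar.spec K _).not.mpr (Nat.Prime.not_dvd_mul hp hp2 hpc)⟩
    refine ⟨c, (Nat.odd_mul.mp ha).2, ?_⟩
    rwa [mul_left_comm, isRoot_cyclotomic_prime_pow_mul_iff_of_charP] at hμ
  · have : CharP K 0 := hp ▸ ringChar.charP K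
    have : CharZero K := CharP.charP_to_charZero K
    have : NeZero ((2 ^ k * a : ℕ) : K) := ⟨Nat.cast_ne_zero.mpr (by have := ha.pos; positivity)⟩
    exact ⟨a, ha, isRoot_cyclotomic_iff.mp hμ⟩

lemma isCoprime_of_forall_isMaximal {A : Type*} [CommRing A] {a b : A}
    (h : ∀ M : Ideal A, M.IsMaximal → a ∈ M → b ∉ M) : IsCoprime a b := by
  rw [← Ideal.isCoprime_span_singleton_iff, Ideal.isCoprime_iff_sup_eq]
  by_contra hne
  obtain ⟨M, hM, hle⟩ := Ideal.exists_le_maximal _ hne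
  exact h M hM (hle (Ideal.mem_sup_left (Ideal.mem_span_singleton_self a)))
    (hle (Ideal.mem_sup_right (Ideal.mem_span_singleton_self b)))

lemma Polynomial.cyclotomic_mem_iff_isRoot {R : Type*} [CommRing R] (M : Ideal R[X]) (n : ℕ) :
    cyclotomic n R ∈ M ↔ (cyclotomic n (R[X] ⧸ M)).IsRoot (Ideal.Quotient.mk M X) := by
  rw [IsRoot, ← Ideal.Quotient.eq_zero_iff_mem, cyclotomic.eval_apply,
    ← map_cyclotomic n (C : R →+* R[X]), eval_map, eval₂_C_X]

lemma Polynomial.isCoprime_cyclotomic_two_pow_mul_odd {R : Type*} [CommRing R]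
    (h2 : IsUnit (2 : R)) {k l a b : ℕ} (ha : Odd a) (hb : Odd b) (hkl : k ≠ l) :
    IsCoprime (cyclotomic (2 ^ k * a) R) (cyclotomic (2 ^ l * b) R) := by
  refine isCoprime_of_forall_isMaximal fun M hM hka hlb => hkl ?_
  have := hM.isPrime
  rw [cyclotomic_mem_iff_isRoot] at hka hlb
  have h2M : (2 : R[X] ⧸ M) ≠ 0 := by
    have := (h2.map ((Ideal.Quotient.mk M).comp C)).ne_zero
    rwa [map_ofNat] at this
  obtain ⟨c, hc, hμc⟩ := exists_odd_isPrimitiveRoot_of_isRoot_cyclotomic h2M ha hka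
  obtain ⟨d, hd, hμd⟩ := exists_odd_isPrimitiveRoot_of_isRoot_cyclotomic h2M hb hlb
  rw [← Nat.padicValNat_two_pow_mul_odd (k := k) hc, hμc.unique hμd,
    Nat.padicValNat_two_pow_mul_odd hd]

namespace Ideal.Quotient

variable {A : Type*} [CommRing A]

abbrev factorOfDvd {a b : A} (h : a ∣ b) : A ⧸ span {b} →+* A ⧸ span {a} :=
  factor (span_singleton_le_span_singleton.mpr h)

@[simp]
lemma factorOfDvd_mk {a b : A} (h : a ∣ b) (x : A) : factorOfDvd h (mk (span {b}) x) = mk _ x :=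
  rfl

lemma factorOfDvd_factorOfDvd {a b c : A} (hab : a ∣ b) (hbc : b ∣ c) (x : A ⧸ span {c}) :
    factorOfDvd hab (factorOfDvd hbc x) = factorOfDvd (hab.trans hbc) x :=
  factor_comp_apply _ _ x

@[simp]
lemma factorOfDvd_refl {a : A} (x : A ⧸ span {a}) : factorOfDvd (dvd_refl a) x = x := by
  simp

lemma subsingleton_of_isUnit {a : A} (ha : IsUnit a) : Subsingleton (A ⧸ span {a}) :=
  Ideal.Quotient.subsingleton_iff.mpr (span_singleton_eq_top.mpr ha)

end Ideal.Quotient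

section

open Ideal.Quotient

variable {R : Type} [CommRing R]

variable (R) in
noncomputable def cyclotomicProd (m : ℕ →₀ ℕ) : R[X] :=
  m.prod fun i e => cyclotomic i R ^ e

lemma IsCycProdIn.mono {S S' : Set ℕ} (h : S ⊆ S') {f : R[X]} (hf : IsCycProdIn R S f) :
    IsCycProdIn R S' f :=
  let ⟨m, hm, hf⟩ := hf
  ⟨m, hm.trans h, hf⟩

lemma isCycProdIn_cyclotomicProd_filter {S : Set ℕ} {m : ℕ →₀ ℕ} (hm : ↑m.support ⊆ S)
    (p : ℕ → Prop) [DecidablePred p] :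
    IsCycProdIn R {n ∈ S | p n} (cyclotomicProd R (m.filter p)) := by
  refine ⟨m.filter p, fun n hn => ?_, rfl⟩
  rw [Finset.mem_coe, Finsupp.support_filter, Finset.mem_filter] at hn
  exact ⟨hm hn.1, hn.2⟩

lemma cyclotomicProd_filter_dvd (m : ℕ →₀ ℕ) (p : ℕ → Prop) [DecidablePred p] :
    cyclotomicProd R (m.filter p) ∣ cyclotomicProd R m :=
  ⟨_, (Finsupp.prod_filter_mul_prod_filter_not p m _).symm⟩

lemma cyclotomicProd_filter_eq_one {m : ℕ →₀ ℕ} {p : ℕ → Prop} [DecidablePred p]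
    (h : ∀ n ∈ m.support, ¬ p n) : cyclotomicProd R (m.filter p) = 1 := by
  rw [cyclotomicProd, Finsupp.prod_filter_index, Finsupp.support_filter, filter_false_of_mem h,
    prod_empty]

lemma IsCycProdIn.isCoprime {A B : Set ℕ}
    (h : ∀ n ∈ A, ∀ n' ∈ B, IsCoprime (cyclotomic n R) (cyclotomic n' R)) {a b : R[X]}
    (ha : IsCycProdIn R A a) (hb : IsCycProdIn R B b) : IsCoprime a b := by
  obtain ⟨m, hm, rfl⟩ := ha
  obtain ⟨m', hm', rfl⟩ := hb
  exact IsCoprime.prod_left fun n hn => IsCoprime.prod_right fun n' hn' =>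
    (h n (hm hn) n' (hm' hn')).pow

lemma cyclotomicProd_eq_prod_filter {ι : Type*} [DecidableEq ι] (κ : ℕ → ι) (m : ℕ →₀ ℕ) :
    cyclotomicProd R m = ∏ k ∈ m.support.image κ, cyclotomicProd R (m.filter (κ · = k)) := by
  rw [cyclotomicProd, Finsupp.prod,
    ← prod_fiberwise_of_maps_to fun i hi => mem_image_of_mem κ hi]
  refine prod_congr rfl fun k _ => ?_
  rw [cyclotomicProd, Finsupp.prod_filter_index, Finsupp.support_filter]

section Decomposition

variable {ι : Type} {S : Set ℕ} {T : ι → Set ℕ} {κ : ℕ → ι}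

lemma isCycProdIn_cyclotomicProd_filter_eq [DecidableEq ι] (hκ : ∀ n ∈ S, n ∈ T (κ n))
    {m : ℕ →₀ ℕ} (hm : ↑m.support ⊆ S) (k : ι) :
    IsCycProdIn R (T k) (cyclotomicProd R (m.filter (κ · = k))) :=
  (isCycProdIn_cyclotomicProd_filter hm _).mono fun n hn => hn.2 ▸ hκ n hn.1

lemma isCoprime_cyclotomicProd_filter [DecidableEq ι] (hκ : ∀ n ∈ S, n ∈ T (κ n))
    (hcop : ∀ k k', k ≠ k' → ∀ n ∈ T k, ∀ n' ∈ T k', IsCoprime (cyclotomic n R) (cyclotomic n' R))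
    {m : ℕ →₀ ℕ} (hm : ↑m.support ⊆ S) {k k' : ι} (hk : k ≠ k') :
    IsCoprime (cyclotomicProd R (m.filter (κ · = k))) (cyclotomicProd R (m.filter (κ · = k'))) :=
  (isCycProdIn_cyclotomicProd_filter_eq hκ hm k).isCoprime (hcop k k' hk)
    (isCycProdIn_cyclotomicProd_filter_eq hκ hm k')

lemma dvd_cyclotomicProd_filter_of_dvd [DecidableEq ι] (hκ : ∀ n ∈ S, n ∈ T (κ n))
    (hcop : ∀ k k', k ≠ k' → ∀ n ∈ T k, ∀ n' ∈ T k', IsCoprime (cyclotomic n R) (cyclotomic n' R))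
    {m : ℕ →₀ ℕ} (hm : ↑m.support ⊆ S) {k : ι} {g : R[X]} (hg : IsCycProdIn R (T k) g)
    (hdvd : g ∣ cyclotomicProd R m) : g ∣ cyclotomicProd R (m.filter (κ · = k)) := by
  have hrest : IsCoprime g (cyclotomicProd R (m.filter fun n => ¬ κ n = k)) :=
    hg.isCoprime (fun n hn n' hn' => hcop k (κ n') (Ne.symm hn'.2) n hn n' (hκ n' hn'.1))
      (isCycProdIn_cyclotomicProd_filter hm _)
  rw [cyclotomicProd, ← Finsupp.prod_filter_mul_prod_filter_not (κ · = k)] at hdvd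
  exact hrest.dvd_of_dvd_mul_right hdvd

namespace CycCompletion

lemma factorOfDvd_apply (x : CycCompletion R S) {f g : {f : R[X] // IsCycProdIn R S f}}
    (h : f.1 ∣ g.1) : factorOfDvd h (x.1 g) = x.1 f :=
  x.2 f g h

variable (R) in
noncomputable def restrict {S' : Set ℕ} (h : S' ⊆ S) :
    CycCompletion R S →+* CycCompletion R S' where
  toFun x :=
    ⟨fun f => x.1 ⟨f.1, f.2.mono h⟩, fun f g hfg => x.2 ⟨f.1, f.2.mono h⟩ ⟨g.1, g.2.mono h⟩ hfg⟩
  map_one' := rfl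
  map_mul' _ _ := rfl
  map_zero' := rfl
  map_add' _ _ := rfl

lemma eq_of_forall_factorOfDvd_eq (hκ : ∀ n ∈ S, n ∈ T (κ n))
    (hcop : ∀ k k', k ≠ k' → ∀ n ∈ T k, ∀ n' ∈ T k', IsCoprime (cyclotomic n R) (cyclotomic n' R))
    {f : R[X]} (hf : IsCycProdIn R S f) {a b : R[X] ⧸ Ideal.span {f}}
    (h : ∀ k g, IsCycProdIn R (T k) g → ∀ hg : g ∣ f, factorOfDvd hg a = factorOfDvd hg b) :
    a = b := by
  classical
  obtain ⟨m, hm, rfl⟩ := hf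
  obtain ⟨u, rfl⟩ := mk_surjective a
  obtain ⟨v, rfl⟩ := mk_surjective b
  rw [Ideal.Quotient.eq, Ideal.mem_span_singleton]
  change cyclotomicProd R m ∣ _
  rw [cyclotomicProd_eq_prod_filter κ]
  refine prod_dvd_of_coprime
    (fun k _ k' _ hk => isCoprime_cyclotomicProd_filter hκ hcop hm hk) fun k _ => ?_
  have hk := h k _ (isCycProdIn_cyclotomicProd_filter_eq hκ hm k) (cyclotomicProd_filter_dvd m _)
  rwa [factor_mk, factor_mk, Ideal.Quotient.eq, Ideal.mem_span_singleton] at hk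

lemma exists_factorOfDvd_eq (hκ : ∀ n ∈ S, n ∈ T (κ n))
    (hcop : ∀ k k', k ≠ k' → ∀ n ∈ T k, ∀ n' ∈ T k', IsCoprime (cyclotomic n R) (cyclotomic n' R))
    {f : R[X]} (hf : IsCycProdIn R S f) (y : Π k, CycCompletion R (T k)) :
    ∃ a : R[X] ⧸ Ideal.span {f}, ∀ k g (hg : IsCycProdIn R (T k) g) (hgf : g ∣ f),
      factorOfDvd hgf a = (y k).1 ⟨g, hg⟩ := by
  classical
  obtain ⟨m, hm, rfl⟩ := hf
  set part : ι → R[X] := fun k => cyclotomicProd R (m.filter (κ · = k))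
  have hpart k : IsCycProdIn R (T k) (part k) := isCycProdIn_cyclotomicProd_filter_eq hκ hm k
  obtain ⟨r, hr⟩ := Ideal.pi_quotient_surjective
    (I := fun k : m.support.image κ => Ideal.span {part k})
    (fun k k' hk => (Ideal.isCoprime_span_singleton_iff _ _).mpr
      (isCoprime_cyclotomicProd_filter hκ hcop hm (Subtype.coe_ne_coe.mpr hk)))
    (fun k => (y k).1 ⟨part k, hpart k⟩)
  refine ⟨mk _ r, fun k g hg hgf => ?_⟩
  have hg_part : g ∣ part k := dvd_cyclotomicProd_filter_of_dvd hκ hcop hm hg hgf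
  by_cases hk : k ∈ m.support.image κ
  · have hrk : mk (Ideal.span {part k}) r = (y k).1 ⟨part k, hpart k⟩ := hr ⟨k, hk⟩
    rw [← factorOfDvd_apply (y k) (f := ⟨g, hg⟩) (g := ⟨part k, hpart k⟩) hg_part, ← hrk,
      factorOfDvd_mk, factorOfDvd_mk]
  · have hpart_one : part k = 1 :=
      cyclotomicProd_filter_eq_one fun n hn hnk => hk (hnk ▸ mem_image_of_mem κ hn)
    have := subsingleton_of_isUnit (isUnit_of_dvd_one (hpart_one ▸ hg_part))
    exact Subsingleton.elim _ _

theorem bijective_pi_restrict (hT : ∀ k, T k ⊆ S) (hκ : ∀ n ∈ S, n ∈ T (κ n))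
    (hcop : ∀ k k', k ≠ k' → ∀ n ∈ T k, ∀ n' ∈ T k', IsCoprime (cyclotomic n R) (cyclotomic n' R)) :
    Function.Bijective (RingHom.pi fun k => CycCompletion.restrict R (hT k)) := by
  constructor
  · intro x x' hxx'
    refine Subtype.ext <| funext fun f =>
      eq_of_forall_factorOfDvd_eq hκ hcop f.2 fun k g hg hgf => ?_
    rw [factorOfDvd_apply x (f := ⟨g, hg.mono (hT k)⟩) hgf,
      factorOfDvd_apply x' (f := ⟨g, hg.mono (hT k)⟩) hgf]
    exact congrArg (fun z => (z k).1 ⟨g, hg⟩) hxx'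
  · intro y
    choose a ha using fun f : {f // IsCycProdIn R S f} => exists_factorOfDvd_eq hκ hcop f.2 y
    refine ⟨⟨a, fun f f' hff' =>
      eq_of_forall_factorOfDvd_eq hκ hcop f.2 fun k g hg hgf => ?_⟩, ?_⟩
    · rw [factorOfDvd_factorOfDvd hgf hff', ha f' k g hg, ha f k g hg]
    · funext k
      refine Subtype.ext <| funext fun g => ?_
      exact (factorOfDvd_refl _).symm.trans (ha ⟨g.1, g.2.mono (hT k)⟩ k g.1 g.2 dvd_rfl)

end CycCompletion

end Decomposition

end

/-- With `Γ = ℤ[1/2][v]`, `S = {n : n ≠ 0, n ≢ 2 mod 4}` and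
`S_k = {2^k(2n+1) : n ∈ ℕ}` (so `S` is the disjoint union of the `S_k`, `k ≠ 1`),
the cyclotomic completion decomposes as `Γ^S ≅ ∏_{k ≠ 1} Γ^{S_k}`. -/
theorem cycCompletion_prod_decomposition :
    Nonempty
      (CycCompletion (Localization.Away (2 : ℤ)) {n : ℕ | n ≠ 0 ∧ n % 4 ≠ 2} ≃+*
        Π k : {k : ℕ // k ≠ 1},
          CycCompletion (Localization.Away (2 : ℤ))
            {m : ℕ | ∃ j : ℕ, m = 2 ^ (k : ℕ) * (2 * j + 1)}) := by
  set T : {k : ℕ // k ≠ 1} → Set ℕ := fun k => {m | ∃ j : ℕ, m = 2 ^ (k : ℕ) * (2 * j + 1)}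
  have hT k : T k ⊆ {n : ℕ | n ≠ 0 ∧ n % 4 ≠ 2} := by
    rintro _ ⟨j, rfl⟩
    exact ⟨by positivity,
      (Nat.two_pow_mul_odd_mod_four_eq_two_iff (odd_two_mul_add_one j)).not.mpr k.2⟩
  have hcover : ∀ n ∈ {n : ℕ | n ≠ 0 ∧ n % 4 ≠ 2}, ∃ k, n ∈ T k := by
    rintro n ⟨hn0, hn4⟩
    obtain ⟨k, c, ⟨j, rfl⟩, rfl⟩ := Nat.exists_eq_two_pow_mul_odd hn0
    exact ⟨⟨k, (Nat.two_pow_mul_odd_mod_four_eq_two_iff (odd_two_mul_add_one j)).not.mp hn4⟩,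
      j, rfl⟩
  have : Nonempty {k : ℕ // k ≠ 1} := ⟨⟨0, zero_ne_one⟩⟩
  choose! κ hκ using hcover
  have h2 : IsUnit (2 : Localization.Away (2 : ℤ)) := by
    simpa using IsLocalization.Away.algebraMap_isUnit (S := Localization.Away (2 : ℤ)) (2 : ℤ)
  have hcop k k' (hk : k ≠ k') :
      ∀ n ∈ T k, ∀ n' ∈ T k',
        IsCoprime (cyclotomic n (Localization.Away (2 : ℤ))) (cyclotomic n' _) := by
    rintro _ ⟨j, rfl⟩ _ ⟨j', rfl⟩
    exact isCoprime_cyclotomic_two_pow_mul_odd h2 (odd_two_mul_add_one j) (odd_two_mul_add_one j')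
      (Subtype.coe_ne_coe.mpr hk)
  exact ⟨RingEquiv.ofBijective _ (CycCompletion.bijective_pi_restrict hT hκ hcop)⟩
end

section
/- For the right-handed trefoil, Habiro's cyclotomic expansion holds: for every positive integer λ, the normalized colored Jones polynomial satisfies J'_{3₁}(λ) = ∑_{k=0}^{λ-1} q^{-k(k+2)} · (q^{1+λ};q)_k · (q^{1-λ};q)_k. -/
open LaurentPolynomial Finset

noncomputable def trefQ (lam k : ℕ) : LaurentPolynomial ℤ :=
  ∏ i ∈ Finset.range k, (1 - T ((1 : ℤ) + lam + i))

noncomputable def trefP (lam k : ℕ) : LaurentPolynomial ℤ :=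
  ∏ i ∈ Finset.range k, (1 - T ((1 : ℤ) - lam + i))

/-- exponent in the telescoping certificate -/
def trefE (lam k j : ℕ) : ℤ :=
  (1 - (k : ℤ)) - (k : ℤ) * j + (lam : ℤ) * ((j : ℤ) - k + 1)

noncomputable def trefS (lam k : ℕ) : LaurentPolynomial ℤ :=
  ∑ j ∈ Finset.range k, T (trefE lam k j) * trefQ lam j

lemma trefQ_succ (lam j : ℕ) :
    trefQ lam (j + 1) = trefQ lam j * (1 - T ((1 : ℤ) + lam + j)) := by
  simp [trefQ, Finset.prod_range_succ]

lemma trefP_succ (lam k : ℕ) :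
    trefP lam (k + 1) = trefP lam k * (1 - T ((k : ℤ) + 1 - lam)) := by
  rw [trefP, Finset.prod_range_succ, show ((1 : ℤ) - lam + k) = ((k : ℤ) + 1 - lam) by ring]
  rfl

lemma tref_step (lam k : ℕ) :
    (1 - T ((k : ℤ) + 1 - lam)) * trefS lam (k + 1)
      = trefS lam k + T (-(k * (k + 2) : ℤ)) * trefQ lam k
        - T ((1 : ℤ) - lam - k * lam) := by
  have hTc : ∀ a : ℤ, (T ((k : ℤ) + 1 - lam) * T a : LaurentPolynomial ℤ) = T (((k : ℤ) + 1 - lam) + a) :=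
    fun a => (T_add _ _).symm
  -- A : T c * S (k+1)
  have hA : T ((k : ℤ) + 1 - lam) * trefS lam (k + 1)
      = (∑ j ∈ Finset.range k, T (trefE lam (k + 1) j) * trefQ lam (j + 1))
        + T ((1 : ℤ) - lam - k * lam) := by
    rw [trefS, Finset.mul_sum]
    have : ∀ j ∈ Finset.range (k + 1),
        T ((k : ℤ) + 1 - lam) * (T (trefE lam (k + 1) j) * trefQ lam j)
          = T (((k : ℤ) + 1 - lam) + trefE lam (k + 1) j) * trefQ lam j := by
      intro j _; rw [← mul_assoc, hTc]
    rw [Finset.sum_congr rfl this, Finset.sum_range_succ']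
    congr 1
    · refine Finset.sum_congr rfl fun j _ => ?_
      congr 2
      simp only [trefE]
      push_cast
      ring
    · rw [show (((k : ℤ) + 1 - lam) + trefE lam (k + 1) 0) = (1 : ℤ) - lam - k * lam by
        simp only [trefE]; push_cast; ring]
      simp [trefQ]
  -- B : S (k+1) expanded
  have hB : trefS lam (k + 1)
      = (∑ j ∈ Finset.range k, T (trefE lam (k + 1) j) * trefQ lam j)
        + T (-(k * (k + 2) : ℤ)) * trefQ lam k := by
    rw [trefS, Finset.sum_range_succ]
    congr 2
    simp only [trefE]
    push_cast
    ring_nf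
  -- C : termwise difference
  have hC : ∀ j ∈ Finset.range k,
      T (trefE lam (k + 1) j) * trefQ lam j - T (trefE lam (k + 1) j) * trefQ lam (j + 1)
        = T (trefE lam k j) * trefQ lam j := by
    intro j _
    rw [trefQ_succ]
    have h1 : (T (trefE lam (k + 1) j) * T ((1 : ℤ) + lam + j) : LaurentPolynomial ℤ) = T (trefE lam k j) := by
      rw [← T_add]
      congr 1
      simp only [trefE]
      push_cast
      ring
    calc T (trefE lam (k + 1) j) * trefQ lam j
          - T (trefE lam (k + 1) j) * (trefQ lam j * (1 - T ((1 : ℤ) + lam + j)))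
        = (T (trefE lam (k + 1) j) * T ((1 : ℤ) + lam + j)) * trefQ lam j := by ring
      _ = T (trefE lam k j) * trefQ lam j := by rw [h1]
  have hsum : (∑ j ∈ Finset.range k, T (trefE lam (k + 1) j) * trefQ lam j)
      - (∑ j ∈ Finset.range k, T (trefE lam (k + 1) j) * trefQ lam (j + 1))
      = trefS lam k := by
    rw [← Finset.sum_sub_distrib, trefS]
    exact Finset.sum_congr rfl hC
  have := hA
  calc (1 - T ((k : ℤ) + 1 - lam)) * trefS lam (k + 1)
      = trefS lam (k + 1) - T ((k : ℤ) + 1 - lam) * trefS lam (k + 1) := by ring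
    _ = _ := by rw [hA, hB]; linear_combination hsum

lemma tref_main (lam : ℕ) : ∀ k : ℕ,
    (∑ j ∈ Finset.range k, T (-(j * (j + 2) : ℤ)) * trefQ lam j * trefP lam j)
      = T ((1 : ℤ) - lam) * (∑ j ∈ Finset.range k, T (-(j * lam : ℤ)) * trefP lam j)
        + trefP lam k * trefS lam k := by
  intro k
  induction k with
  | zero => simp [trefS, trefP]
  | succ k ih =>
    rw [Finset.sum_range_succ, Finset.sum_range_succ, ih, trefP_succ]
    have hst := tref_step lam k
    have hT : (T ((1 : ℤ) - lam) * T (-(k * lam : ℤ)) : LaurentPolynomial ℤ) = T ((1 : ℤ) - lam - k * lam) := by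
      rw [← T_add]; congr 1
    linear_combination (- trefP lam k) * hst - trefP lam k * hT

/-- Habiro's cyclotomic expansion of the colored Jones polynomial of the
right-handed trefoil agrees with the Habiro–Lê closed formula: for every `λ ≥ 1`,
`∑_{k=0}^{λ-1} q^{-k(k+2)} (q^{1+λ};q)_k (q^{1-λ};q)_k
  = q^{1-λ} ∑_{k=0}^{λ-1} q^{-kλ} ∏_{j=1}^{k} (1 - q^{j-λ})`
as Laurent polynomials in `q = T 1` over `ℤ`. -/
theorem trefoil_cyclotomic_expansion (lam : ℕ) (hlam : 1 ≤ lam) :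
    (∑ k ∈ Finset.range lam,
        T (-(k * (k + 2) : ℤ)) *
          (∏ i ∈ Finset.range k, (1 - T ((1 : ℤ) + lam + i))) *
          ∏ i ∈ Finset.range k, (1 - T ((1 : ℤ) - lam + i))
      : LaurentPolynomial ℤ) =
      T ((1 : ℤ) - lam) *
        ∑ k ∈ Finset.range lam,
          T (-(k * lam : ℤ)) * ∏ j ∈ Finset.range k, (1 - T (((j : ℤ) + 1) - lam)) := by
  have hP0 : trefP lam lam = 0 := by
    apply Finset.prod_eq_zero (i := lam - 1)
    · exact Finset.mem_range.mpr (by omega)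
    · rw [show ((1 : ℤ) - lam + (↑(lam - 1) : ℤ)) = 0 by
        have : ((lam - 1 : ℕ) : ℤ) = (lam : ℤ) - 1 := by
          omega
        rw [this]; ring]
      simp
  have h := tref_main lam lam
  rw [hP0, zero_mul, add_zero] at h
  calc (∑ k ∈ Finset.range lam,
        T (-(k * (k + 2) : ℤ)) *
          (∏ i ∈ Finset.range k, (1 - T ((1 : ℤ) + lam + i))) *
          ∏ i ∈ Finset.range k, (1 - T ((1 : ℤ) - lam + i)))
      = ∑ j ∈ Finset.range lam, T (-(j * (j + 2) : ℤ)) * trefQ lam j * trefP lam j := rfl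
    _ = T ((1 : ℤ) - lam) * (∑ j ∈ Finset.range lam, T (-(j * lam : ℤ)) * trefP lam j) := h
    _ = _ := by
        congr 1
        refine Finset.sum_congr rfl fun j _ => ?_
        congr 1
        refine Finset.prod_congr rfl fun i _ => ?_
        rw [show ((1 : ℤ) - lam + i) = (((i : ℤ) + 1) - lam) by ring]
end
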